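/- arXiv:1903.02837 — 11 statements merged into one kernel-verified Lean document; each statement's English description precedes it below -/
import Mathlib

section
/- Let n ≥ 2, k ≥ 1 be integers, γ ∈ (0,1), ε ∈ (0,1], δ ∈ (0,1], and set c = γ(n-1)/k. Let N₁ and N₂ be (possibly dependent) random variables defined on a common probability space such that N₁ - 1 is distributed as Bin(n-1, γ/k) and N₂ is distributed as Bin(n-1, γ/k). If c ≥ max{14·log(2/δ)/ε², 27/ε}, then P[N₁ ≥ e^ε · N₂] ≤ δ. -/
/-!
Cut at θ = (1 - 2ε/5)c. If e^ε N₂ ≤ N₁, then either N₂ ≤ θ or N₁ - 1 ≥ e^ε θ - 1, and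
e^ε θ - 1 ≥ (1 + 9ε/20)c once εc ≥ 27. A union bound needs only the two marginal laws, and
Chernoff's bound with tilt 2ε/5, computed directly from the binomial probabilities, makes each
event of probability at most exp(-ε²c/14) ≤ δ/2.
-/

open MeasureTheory Finset Real

theorem sum_choose_mul_exp_le (m : ℕ) {p : ℝ} (hp0 : 0 ≤ p) (hp1 : p ≤ 1) (s : ℝ) :
    ∑ j ∈ range (m + 1), (m.choose j : ℝ) * p ^ j * (1 - p) ^ (m - j) * exp (s * j)
      ≤ exp (m * p * (exp s - 1)) := by
  have hsum : ∑ j ∈ range (m + 1), (m.choose j : ℝ) * p ^ j * (1 - p) ^ (m - j) * exp (s * j)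
      = (p * exp s + (1 - p)) ^ m := by
    rw [add_pow]
    refine sum_congr rfl fun j _ => ?_
    rw [mul_pow, mul_comm s, exp_nat_mul]
    ring
  rw [hsum, mul_assoc, exp_nat_mul]
  gcongr ?_ ^ m
  linarith [add_one_le_exp (p * (exp s - 1))]

section Binomial

variable {Ω : Type*} [MeasurableSpace Ω] (μ : Measure Ω) (X : Ω → ℕ) (m : ℕ) {p : ℝ}

theorem measure_mul_le_mul_le_of_binomial (hp0 : 0 ≤ p) (hp1 : p ≤ 1)
    (hX : ∀ j : ℕ, μ {ω | X ω = j} ≤ ENNReal.ofReal ((m.choose j : ℝ) * p ^ j * (1 - p) ^ (m - j)))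
    (s θ : ℝ) :
    μ {ω | s * θ ≤ s * X ω} ≤ ENNReal.ofReal (exp (m * p * (exp s - 1) - s * θ)) := by
  set f : ℕ → ℝ := fun j => (m.choose j : ℝ) * p ^ j * (1 - p) ^ (m - j) * exp (s * j - s * θ)
  have hf0 : ∀ j, 0 ≤ f j := fun j => by have := sub_nonneg.2 hp1; positivity
  have hterm : ∀ j, μ ({ω | X ω = j} ∩ {ω | s * θ ≤ s * X ω}) ≤ ENNReal.ofReal (f j) := by
    intro j
    by_cases hj : s * θ ≤ s * j
    · calc _ ≤ μ {ω | X ω = j} := measure_mono Set.inter_subset_left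
        _ ≤ _ := hX j
        _ ≤ _ := ENNReal.ofReal_le_ofReal <| le_mul_of_one_le_right
              (by have := sub_nonneg.2 hp1; positivity) (one_le_exp (by linarith))
    · have hempty : {ω | X ω = j} ∩ {ω | s * θ ≤ s * X ω} = ∅ := by
        ext ω
        simp only [Set.mem_inter_iff, Set.mem_ofPred_eq, Set.mem_empty_iff_false, iff_false]
        rintro ⟨rfl, h⟩
        exact hj h
      simp [hempty]
  have hvanish : ∀ j ∉ range (m + 1), ENNReal.ofReal (f j) = 0 := by
    intro j hj
    simp [f, Nat.choose_eq_zero_of_lt (by simpa [Nat.lt_succ_iff] using hj : m < j)]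
  calc μ {ω | s * θ ≤ s * X ω} ≤ ∑' j, μ ({ω | X ω = j} ∩ {ω | s * θ ≤ s * X ω}) := by
        refine (measure_mono fun ω hω => ?_).trans (measure_iUnion_le _)
        exact Set.mem_iUnion.2 ⟨X ω, rfl, hω⟩
    _ ≤ ∑' j, ENNReal.ofReal (f j) := ENNReal.tsum_le_tsum hterm
    _ = ENNReal.ofReal (∑ j ∈ range (m + 1), f j) := by
        rw [tsum_eq_sum hvanish, ENNReal.ofReal_sum_of_nonneg fun j _ => hf0 j]
    _ ≤ _ := by
        gcongr
        calc ∑ j ∈ range (m + 1), f j = exp (-(s * θ)) *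
              ∑ j ∈ range (m + 1), (m.choose j : ℝ) * p ^ j * (1 - p) ^ (m - j) * exp (s * j) := by
              rw [mul_sum]
              refine sum_congr rfl fun j _ => ?_
              simp only [f, sub_eq_add_neg, exp_add]
              ring
          _ ≤ exp (-(s * θ)) * exp (m * p * (exp s - 1)) := by
              gcongr
              exact sum_choose_mul_exp_le m hp0 hp1 s
          _ = _ := by rw [← exp_add]; ring_nf

theorem measure_ge_le_of_binomial (hp0 : 0 ≤ p) (hp1 : p ≤ 1)
    (hX : ∀ j : ℕ, μ {ω | X ω = j} ≤ ENNReal.ofReal ((m.choose j : ℝ) * p ^ j * (1 - p) ^ (m - j)))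
    {t : ℝ} (ht : 0 ≤ t) (θ : ℝ) :
    μ {ω | θ ≤ X ω} ≤ ENNReal.ofReal (exp (m * p * (exp t - 1) - t * θ)) :=
  (measure_mono fun _ h => mul_le_mul_of_nonneg_left h ht).trans
    (measure_mul_le_mul_le_of_binomial μ X m hp0 hp1 hX t θ)

theorem measure_le_le_of_binomial (hp0 : 0 ≤ p) (hp1 : p ≤ 1)
    (hX : ∀ j : ℕ, μ {ω | X ω = j} ≤ ENNReal.ofReal ((m.choose j : ℝ) * p ^ j * (1 - p) ^ (m - j)))
    {t : ℝ} (ht : 0 ≤ t) (θ : ℝ) :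
    μ {ω | (X ω : ℝ) ≤ θ} ≤ ENNReal.ofReal (exp (m * p * (exp (-t) - 1) + t * θ)) := by
  have h := measure_mul_le_mul_le_of_binomial μ X m hp0 hp1 hX (-t) θ
  rw [neg_mul, sub_neg_eq_add] at h
  refine (measure_mono fun ω (hω : (X ω : ℝ) ≤ θ) => ?_).trans h
  simpa only [Set.mem_ofPred_eq, neg_mul, neg_le_neg_iff] using mul_le_mul_of_nonneg_left hω ht

end Binomial

theorem exp_neg_le_one_sub_add_sq_div_two {x : ℝ} (hx : 0 ≤ x) :
    exp (-x) ≤ 1 - x + x ^ 2 / 2 := by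
  have hcubic : 1 + x + x ^ 2 / 2 + x ^ 3 / 6 ≤ exp x := by
    have := sum_le_exp_of_nonneg hx 4
    norm_num [sum_range_succ, Nat.factorial] at this
    linarith
  rw [exp_neg, inv_le_iff_one_le_mul₀' (exp_pos x)]
  -- (1 - x + x²/2)(1 + x + x²/2 + x³/6) = 1 + x³/6 + x⁴/12 + x⁵/12
  nlinarith [mul_le_mul_of_nonneg_left hcubic (by nlinarith : 0 ≤ 1 - x + x ^ 2 / 2),
    pow_nonneg hx 3, pow_nonneg hx 4, pow_nonneg hx 5]

theorem exp_le_cubic_of_le_one {x : ℝ} (hx0 : 0 ≤ x) (hx1 : x ≤ 1) :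
    exp x ≤ 1 + x + x ^ 2 / 2 + 2 * x ^ 3 / 9 := by
  have := exp_bound' hx0 hx1 (n := 3) (by norm_num)
  norm_num [sum_range_succ, Nat.factorial] at this
  linarith

theorem lower_tail_exponent_le {ε c : ℝ} (hε : 0 ≤ ε) (hc : 0 ≤ c) :
    c * (exp (-(2 * ε / 5)) - 1) + 2 * ε / 5 * ((1 - 2 * ε / 5) * c) ≤ -(ε ^ 2 * c / 14) := by
  have h := exp_neg_le_one_sub_add_sq_div_two (by positivity : 0 ≤ 2 * ε / 5)
  nlinarith [mul_le_mul_of_nonneg_left h hc, mul_nonneg (sq_nonneg ε) hc]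

theorem upper_tail_exponent_le {ε c : ℝ} (hε0 : 0 < ε) (hε1 : ε ≤ 1) (hεc : 27 ≤ ε * c) :
    c * (exp (2 * ε / 5) - 1) - 2 * ε / 5 * (exp ε * ((1 - 2 * ε / 5) * c) - 1)
      ≤ -(ε ^ 2 * c / 14) := by
  have hc : 0 < c := pos_of_mul_pos_right (by linarith) hε0.le
  have hup := exp_le_cubic_of_le_one (by positivity : 0 ≤ 2 * ε / 5) (by linarith)
  have hlow : (1 + ε + ε ^ 2 / 2) * (1 - 2 * ε / 5) ≤ exp ε * (1 - 2 * ε / 5) :=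
    mul_le_mul_of_nonneg_right (quadratic_le_exp_of_nonneg hε0.le) (by linarith)
  have hpoly : (2 * ε / 5) ^ 2 / 2 + 2 * (2 * ε / 5) ^ 3 / 9
      - 2 * ε / 5 * ((1 + ε + ε ^ 2 / 2) * (1 - 2 * ε / 5) - 1) + 2 * ε ^ 2 / 135
      ≤ -(ε ^ 2 / 14) := by
    nlinarith [pow_pos hε0 2, pow_pos hε0 3, mul_le_mul_of_nonneg_left hε1 (pow_pos hε0 3).le]
  -- the `- 1` contributes at most 2ε/5 ≤ 2ε²c/135, by εc ≥ 27
  nlinarith [mul_le_mul_of_nonneg_left hup hc.le,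
    mul_le_mul_of_nonneg_left hlow (by positivity : 0 ≤ 2 * ε / 5 * c),
    mul_le_mul_of_nonneg_left hpoly hc.le]

theorem measure_sub_one_eq_le {Ω : Type*} [MeasurableSpace Ω] (μ : Measure Ω) (N : Ω → ℕ)
    (hN : μ {ω | N ω = 0} = 0) (j : ℕ) : μ {ω | N ω - 1 = j} ≤ μ {ω | N ω = j + 1} :=
  calc μ {ω | N ω - 1 = j} ≤ μ ({ω | N ω = 0} ∪ {ω | N ω = j + 1}) :=
        measure_mono fun ω (h : N ω - 1 = j) => by
          simp only [Set.mem_union, Set.mem_ofPred_eq]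
          omega
    _ ≤ μ {ω | N ω = j + 1} := (measure_union_le _ _).trans (by rw [hN, zero_add])

theorem setOf_mul_le_subset_union {Ω : Type*} (N₁ N₂ : Ω → ℕ) {a : ℝ} (ha : 0 ≤ a) (θ : ℝ) :
    {ω | a * (N₂ ω : ℝ) ≤ N₁ ω}
      ⊆ {ω | (N₂ ω : ℝ) ≤ θ} ∪ {ω | a * θ - 1 ≤ ((N₁ ω - 1 : ℕ) : ℝ)} := by
  intro ω (hω : a * (N₂ ω : ℝ) ≤ N₁ ω)
  rcases le_or_gt (N₂ ω : ℝ) θ with h | h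
  · exact Or.inl h
  · have hN₁ : (N₁ ω : ℝ) ≤ ((N₁ ω - 1 : ℕ) : ℝ) + 1 := by
      exact_mod_cast (by omega : N₁ ω ≤ N₁ ω - 1 + 1)
    right
    show a * θ - 1 ≤ _
    nlinarith

theorem stmt1_general {Ω : Type*} [MeasurableSpace Ω] (μ : Measure Ω)
    (n k : ℕ) (hn : 2 ≤ n) (hk : 1 ≤ k)
    (γ ε δ : ℝ) (hγ : γ ∈ Set.Ioo (0:ℝ) 1) (hε : ε ∈ Set.Ioc (0:ℝ) 1)
    (hδ : δ ∈ Set.Ioc (0:ℝ) 1)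
    (N₁ N₂ : Ω → ℕ)
    (hN₁zero : μ {ω | N₁ ω = 0} = 0)
    (hN₁ : ∀ j : ℕ, μ {ω | N₁ ω = j + 1}
      = ENNReal.ofReal (((n - 1).choose j : ℝ) * (γ / k) ^ j * (1 - γ / k) ^ (n - 1 - j)))
    (hN₂ : ∀ j : ℕ, μ {ω | N₂ ω = j}
      = ENNReal.ofReal (((n - 1).choose j : ℝ) * (γ / k) ^ j * (1 - γ / k) ^ (n - 1 - j)))
    (hc : max (14 * Real.log (2 / δ) / ε ^ 2) (27 / ε) ≤ γ * ((n:ℝ) - 1) / k) :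
    μ {ω | Real.exp ε * (N₂ ω : ℝ) ≤ (N₁ ω : ℝ)} ≤ ENNReal.ofReal δ := by
  obtain ⟨hγ0, hγ1⟩ := hγ
  obtain ⟨hε0, hε1⟩ := hε
  have hδ0 : 0 < δ := hδ.1
  have hp0 : 0 ≤ γ / k := by positivity
  have hp1 : γ / k ≤ 1 := (div_le_self hγ0.le (by exact_mod_cast hk)).trans hγ1.le
  set c : ℝ := ((n - 1 : ℕ) : ℝ) * (γ / k) with hc_def
  have hc_eq : γ * ((n : ℝ) - 1) / k = c := by
    rw [hc_def, Nat.cast_sub (by omega), Nat.cast_one]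
    ring
  rw [hc_eq, max_le_iff, div_le_iff₀ (by positivity), div_le_iff₀ hε0] at hc
  obtain ⟨hLc, hεc⟩ := hc
  have hexp_le_half : ∀ E, E ≤ -(ε ^ 2 * c / 14) →
      ENNReal.ofReal (exp E) ≤ ENNReal.ofReal (δ / 2) := fun E hE =>
    ENNReal.ofReal_le_ofReal <| calc exp E ≤ exp (-log (2 / δ)) := exp_le_exp.2 (by linarith)
      _ = δ / 2 := by rw [exp_neg, exp_log (by positivity), inv_div]
  have ht : 0 ≤ 2 * ε / 5 := by positivity
  set θ : ℝ := (1 - 2 * ε / 5) * c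
  have hlow : μ {ω | (N₂ ω : ℝ) ≤ θ} ≤ ENNReal.ofReal (δ / 2) :=
    (measure_le_le_of_binomial μ N₂ (n - 1) hp0 hp1 (fun j => (hN₂ j).le) ht θ).trans
      (hexp_le_half _ (lower_tail_exponent_le hε0.le (by positivity)))
  have hup : μ {ω | exp ε * θ - 1 ≤ ((N₁ ω - 1 : ℕ) : ℝ)} ≤ ENNReal.ofReal (δ / 2) :=
    (measure_ge_le_of_binomial μ (fun ω => N₁ ω - 1) (n - 1) hp0 hp1
      (fun j => (measure_sub_one_eq_le μ N₁ hN₁zero j).trans (hN₁ j).le) ht _).trans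
      (hexp_le_half _ (upper_tail_exponent_le hε0 hε1 (by linarith)))
  calc μ {ω | exp ε * (N₂ ω : ℝ) ≤ N₁ ω}
      ≤ μ {ω | (N₂ ω : ℝ) ≤ θ} + μ {ω | exp ε * θ - 1 ≤ ((N₁ ω - 1 : ℕ) : ℝ)} :=
        (measure_mono (setOf_mul_le_subset_union N₁ N₂ (exp_pos ε).le θ)).trans
          (measure_union_le _ _)
    _ ≤ ENNReal.ofReal (δ / 2) + ENNReal.ofReal (δ / 2) := add_le_add hlow hup
    _ = ENNReal.ofReal δ := by
        rw [← ENNReal.ofReal_add (by positivity) (by positivity), add_halves]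

/-- If `N₁ - 1 ~ Bin(n-1, γ/k)` and `N₂ ~ Bin(n-1, γ/k)` (possibly
dependent) and `c = γ(n-1)/k ≥ max {14 log(2/δ)/ε², 27/ε}`, then `P[N₁ ≥ e^ε N₂] ≤ δ`. -/
theorem stmt1 {Ω : Type*} [MeasurableSpace Ω] (μ : Measure Ω) [IsProbabilityMeasure μ]
    (n k : ℕ) (hn : 2 ≤ n) (hk : 1 ≤ k)
    (γ ε δ : ℝ) (hγ : γ ∈ Set.Ioo (0:ℝ) 1) (hε : ε ∈ Set.Ioc (0:ℝ) 1)
    (hδ : δ ∈ Set.Ioc (0:ℝ) 1)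
    (N₁ N₂ : Ω → ℕ) (hN₁meas : Measurable N₁) (hN₂meas : Measurable N₂)
    (hN₁zero : μ {ω | N₁ ω = 0} = 0)
    (hN₁ : ∀ j : ℕ, μ {ω | N₁ ω = j + 1}
      = ENNReal.ofReal (((n - 1).choose j : ℝ) * (γ / k) ^ j * (1 - γ / k) ^ (n - 1 - j)))
    (hN₂ : ∀ j : ℕ, μ {ω | N₂ ω = j}
      = ENNReal.ofReal (((n - 1).choose j : ℝ) * (γ / k) ^ j * (1 - γ / k) ^ (n - 1 - j)))
    (hc : max (14 * Real.log (2 / δ) / ε ^ 2) (27 / ε) ≤ γ * ((n:ℝ) - 1) / k) :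
    μ {ω | Real.exp ε * (N₂ ω : ℝ) ≤ (N₁ ω : ℝ)} ≤ ENNReal.ofReal δ :=
  stmt1_general μ n k hn hk γ ε δ hγ hε hδ N₁ N₂ hN₁zero hN₁ hN₂ hc
end

section
/- Fix n, k ∈ ℕ with n, k ≥ 1, γ ∈ (0,1), and inputs x_1, …, x_n ∈ [0,1]. For each i let x̄_i = ⌊x_i k⌋ + Ber(x_i k - ⌊x_i k⌋) (randomized rounding), let b_i ~ Ber(γ), let U_i be uniform on {0,1,…,k}, all mutually independent, and let y_i = x̄_i if b_i = 0 and y_i = U_i if b_i = 1. Define the estimator z = ((1/k)·Σ_{i=1}^n y_i − γn/2)/(1−γ). Then z is unbiased, i.e. E[z] = Σ_{i=1}^n x_i, and its mean squared error satisfies E[(z − Σ_{i=1}^n x_i)²] ≤ (n/(1−γ)²)·(1/(4k²) + γ/2). -/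
/-!
Each report `y i` is a mixture: with probability `1 - γ` it is the randomized rounding of
`x i * k`, with mean `x i * k` and variance `q (1 - q) ≤ 1/4` (`q` the fractional part), and with
probability `γ` it is uniform on `{0, …, k}`. So `E[y i] = (1 - γ) x i k + γ k / 2`, which the
debiasing inverts, and the law of total variance gives
`Var[y i] = (1 - γ) q (1 - q) + γ (k² + 2k) / 12 + γ (1 - γ) (x i k - k / 2)² ≤ 1/4 + γ k² / 2`.
Reports of distinct users are independent, so the mean squared error of the unbiased `z` is
`∑ i, Var[y i] / (k (1 - γ))²`.
-/

open MeasureTheory ProbabilityTheory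
open scoped ENNReal

section FiniteSupport

variable {Ω α : Type*} [MeasurableSpace Ω] [MeasurableSpace α] [DiscreteMeasurableSpace α]
  {μ : Measure Ω} {T : Ω → α}

lemma ae_mem_of_sum_measure_eq_one [IsProbabilityMeasure μ] (hT : Measurable T) {S : Finset α}
    (h : ∑ j ∈ S, μ {ω | T ω = j} = 1) : ∀ᵐ ω ∂μ, T ω ∈ S := by
  have hS : μ (T ⁻¹' S) = 1 :=
    (sum_measure_preimage_singleton S fun j _ => hT (measurableSet_singleton j)).symm.trans h
  exact (prob_compl_eq_zero_iff (hT S.measurableSet)).2 hS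

lemma integrable_comp_of_ae_mem [IsFiniteMeasure μ] (hT : Measurable T) {S : Finset α}
    (hS : ∀ᵐ ω ∂μ, T ω ∈ S) (f : α → ℝ) : Integrable (fun ω => f (T ω)) μ := by
  refine .of_bound (Measurable.of_discrete.comp hT).aestronglyMeasurable (∑ j ∈ S, ‖f j‖) ?_
  filter_upwards [hS] with ω hω
  exact Finset.single_le_sum (f := fun j => ‖f j‖) (fun _ _ => norm_nonneg _) hω

lemma integral_comp_eq_sum_of_ae_mem [IsFiniteMeasure μ] (hT : Measurable T) {S : Finset α}
    (hS : ∀ᵐ ω ∂μ, T ω ∈ S) (f : α → ℝ) :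
    ∫ ω, f (T ω) ∂μ = ∑ j ∈ S, μ.real {ω | T ω = j} * f j := by
  have hS' : ∀ᵐ a ∂μ.map T, a ∈ (S : Set α) :=
    (ae_map_iff hT.aemeasurable S.measurableSet).2 hS
  rw [← integral_map hT.aemeasurable Measurable.of_discrete.aestronglyMeasurable,
    ← Measure.restrict_eq_self_of_ae_mem hS', setIntegral_finset]
  · simp [map_measureReal_apply hT (measurableSet_singleton _), Set.preimage]
  · exact ((integrable_map_measure Measurable.of_discrete.aestronglyMeasurable
      hT.aemeasurable).2 (integrable_comp_of_ae_mem hT hS f)).integrableOn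

end FiniteSupport

section Mixture

variable {Ω β : Type*} [MeasurableSpace Ω] [MeasurableSpace β] {μ : Measure Ω}
  [IsFiniteMeasure μ] {X U : Ω → ℝ} {B : Ω → β}

lemma ProbabilityTheory.IndepFun.integral_mul_indicator_comp {s : Set β} (hB : Measurable B)
    (hs : MeasurableSet s) (hX : Integrable X μ) (hXB : IndepFun X B μ) :
    Integrable (fun ω => X ω * s.indicator 1 (B ω)) μ ∧
      ∫ ω, X ω * s.indicator 1 (B ω) ∂μ = μ.real (B ⁻¹' s) * ∫ ω, X ω ∂μ := by
  have hXI : IndepFun X (fun ω => s.indicator (1 : β → ℝ) (B ω)) μ :=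
    hXB.comp measurable_id (measurable_const.indicator hs)
  have hcomp : (fun ω => s.indicator (1 : β → ℝ) (B ω)) = (B ⁻¹' s).indicator 1 := by
    ext ω
    rw [← Set.indicator_comp_right]
    rfl
  have hI : Integrable (fun ω => s.indicator (1 : β → ℝ) (B ω)) μ :=
    hcomp ▸ (integrable_const (1 : ℝ)).indicator (hB hs)
  refine ⟨hXI.integrable_mul hX hI, ?_⟩
  rw [hXI.integral_fun_mul_eq_mul_integral hX.aestronglyMeasurable hI.aestronglyMeasurable,
    hcomp, integral_indicator_one (hB hs), mul_comm]

lemma integral_ite_of_indepFun {p : β → Prop} [DecidablePred p] (hB : Measurable B)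
    (hp : MeasurableSet {b | p b}) (hX : Integrable X μ) (hU : Integrable U μ)
    (hXB : IndepFun X B μ) (hUB : IndepFun U B μ) :
    Integrable (fun ω => if p (B ω) then X ω else U ω) μ ∧
      ∫ ω, (if p (B ω) then X ω else U ω) ∂μ
        = μ.real {ω | p (B ω)} * ∫ ω, X ω ∂μ + μ.real {ω | ¬p (B ω)} * ∫ ω, U ω ∂μ := by
  obtain ⟨hXint, hXval⟩ := hXB.integral_mul_indicator_comp hB hp hX
  obtain ⟨hUint, hUval⟩ := hUB.integral_mul_indicator_comp hB hp.compl hU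
  have hsplit : (fun ω => if p (B ω) then X ω else U ω) = fun ω =>
      X ω * {b | p b}.indicator 1 (B ω) + U ω * {b | p b}ᶜ.indicator 1 (B ω) := by
    ext ω
    by_cases h : p (B ω) <;> simp [h]
  rw [hsplit, integral_add hXint hUint, hXval, hUval]
  exact ⟨hXint.add hUint, rfl⟩

end Mixture

lemma ProbabilityTheory.iIndepFun.pairwise_indepFun_comp_row {Ω ι κ β γ : Type*}
    [MeasurableSpace Ω] [MeasurableSpace β] [MeasurableSpace γ] [Fintype κ] {μ : Measure Ω}
    {f : ι × κ → Ω → β} (h : iIndepFun f μ) (hf : ∀ p, Measurable (f p)) {g : (κ → β) → γ}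
    (hg : Measurable g) :
    Pairwise fun i j =>
      IndepFun (fun ω => g fun c => f (i, c) ω) (fun ω => g fun c => f (j, c) ω) μ := by
  intro i j hij
  have hdisj : Disjoint ({i} ×ˢ Finset.univ : Finset (ι × κ)) ({j} ×ˢ Finset.univ) := by
    simp [Finset.disjoint_left, hij.symm]
  have hrow (l : ι) : Measurable fun (v : ({l} ×ˢ Finset.univ : Finset (ι × κ)) → β) =>
      g fun c => v ⟨(l, c), by simp⟩ :=
    hg.comp (measurable_pi_lambda _ fun c => measurable_pi_apply _)
  exact (h.indepFun_finset _ _ hdisj hf).comp (hrow i) (hrow j)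

section Laws

variable {Ω : Type*} [MeasurableSpace Ω] {μ : Measure Ω} [IsProbabilityMeasure μ] {T : Ω → ℕ}

lemma integral_comp_of_two_point_law (hT : Measurable T) {m : ℕ} {q : ℝ} (hq0 : 0 ≤ q)
    (hq1 : q ≤ 1) (h1 : μ {ω | T ω = m + 1} = ENNReal.ofReal q)
    (h0 : μ {ω | T ω = m} = ENNReal.ofReal (1 - q)) (f : ℕ → ℝ) :
    Integrable (fun ω => f (T ω)) μ ∧ ∫ ω, f (T ω) ∂μ = (1 - q) * f m + q * f (m + 1) := by
  have hS : ∀ᵐ ω ∂μ, T ω ∈ ({m, m + 1} : Finset ℕ) := by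
    refine ae_mem_of_sum_measure_eq_one hT ?_
    rw [Finset.sum_pair (by omega), h0, h1, ← ENNReal.ofReal_add (by linarith) hq0]
    simp
  refine ⟨integrable_comp_of_ae_mem hT hS f, ?_⟩
  rw [integral_comp_eq_sum_of_ae_mem hT hS, Finset.sum_pair (by omega), measureReal_def,
    measureReal_def, h0, h1, ENNReal.toReal_ofReal (by linarith), ENNReal.toReal_ofReal hq0]

lemma integral_comp_of_uniform_law (hT : Measurable T) {k : ℕ}
    (h : ∀ j ≤ k, μ {ω | T ω = j} = ((k : ℝ≥0∞) + 1)⁻¹) (f : ℕ → ℝ) :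
    Integrable (fun ω => f (T ω)) μ ∧
      ∫ ω, f (T ω) ∂μ = (∑ j ∈ Finset.range (k + 1), f j) / (k + 1) := by
  have h' : ∀ j ∈ Finset.range (k + 1), μ {ω | T ω = j} = ((k : ℝ≥0∞) + 1)⁻¹ :=
    fun j hj => h j (Nat.lt_succ_iff.mp (Finset.mem_range.mp hj))
  have hS : ∀ᵐ ω ∂μ, T ω ∈ Finset.range (k + 1) := by
    refine ae_mem_of_sum_measure_eq_one hT ?_
    rw [Finset.sum_congr rfl h', Finset.sum_const, Finset.card_range, nsmul_eq_mul]
    push_cast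
    exact ENNReal.mul_inv_cancel (by simp) (by simp)
  refine ⟨integrable_comp_of_ae_mem hT hS f, ?_⟩
  rw [integral_comp_eq_sum_of_ae_mem hT hS, div_eq_mul_inv, Finset.sum_mul]
  refine Finset.sum_congr rfl fun j hj => ?_
  rw [measureReal_def, h' j hj, ENNReal.toReal_inv]
  norm_cast
  ring

end Laws

lemma sum_range_succ_natCast (k : ℕ) : ∑ j ∈ Finset.range (k + 1), (j : ℝ) = k * (k + 1) / 2 := by
  induction k with
  | zero => simp
  | succ k ih => rw [Finset.sum_range_succ, ih]; push_cast; ring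

lemma sum_range_succ_natCast_sq (k : ℕ) :
    ∑ j ∈ Finset.range (k + 1), (j : ℝ) ^ 2 = k * (k + 1) * (2 * k + 1) / 6 := by
  induction k with
  | zero => simp
  | succ k ih => rw [Finset.sum_range_succ, ih]; push_cast; ring

section RandomizedResponse

variable {Ω : Type*} [MeasurableSpace Ω] {μ : Measure Ω} [IsProbabilityMeasure μ]
  {X B U : Ω → ℕ} {m k : ℕ} {q γ : ℝ}
  (hX : Measurable X) (hB : Measurable B) (hU : Measurable U) (hq0 : 0 ≤ q) (hq1 : q ≤ 1)
  (hX1 : μ {ω | X ω = m + 1} = ENNReal.ofReal q)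
  (hX0 : μ {ω | X ω = m} = ENNReal.ofReal (1 - q)) (hγ : γ ≤ 1)
  (hB0 : μ {ω | B ω = 0} = ENNReal.ofReal (1 - γ))
  (hUk : ∀ j ≤ k, μ {ω | U ω = j} = ((k : ℝ≥0∞) + 1)⁻¹)
  (hXB : IndepFun X B μ) (hUB : IndepFun U B μ)
include hX hB hU hq0 hq1 hX1 hX0 hγ hB0 hUk hXB hUB

lemma integral_comp_randomizedResponse (f : ℕ → ℝ) :
    Integrable (fun ω => f (if B ω = 0 then X ω else U ω)) μ ∧
      ∫ ω, f (if B ω = 0 then X ω else U ω) ∂μ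
        = (1 - γ) * ((1 - q) * f m + q * f (m + 1))
          + γ * ((∑ j ∈ Finset.range (k + 1), f j) / (k + 1)) := by
  obtain ⟨hfX, hEX⟩ := integral_comp_of_two_point_law hX hq0 hq1 hX1 hX0 f
  obtain ⟨hfU, hEU⟩ := integral_comp_of_uniform_law hU hUk f
  have hmix := integral_ite_of_indepFun (p := (· = 0)) hB (measurableSet_singleton 0) hfX hfU
    (hXB.comp (measurable_of_countable f) measurable_id)
    (hUB.comp (measurable_of_countable f) measurable_id)
  have hB0' : μ.real {ω | B ω = 0} = 1 - γ := by
    rw [measureReal_def, hB0, ENNReal.toReal_ofReal (by linarith)]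
  have hB1' : μ.real {ω | ¬B ω = 0} = γ :=
    calc μ.real {ω | ¬B ω = 0} = 1 - μ.real {ω | B ω = 0} :=
          probReal_compl_eq_one_sub (hB (measurableSet_singleton 0))
      _ = γ := by rw [hB0']; ring
  simp only [apply_ite f]
  rw [← hEX, ← hEU, ← hB0', ← hB1']
  exact hmix


lemma memLp_two_randomizedResponse :
    MemLp (fun ω => ((if B ω = 0 then X ω else U ω : ℕ) : ℝ)) 2 μ :=
  (memLp_two_iff_integrable_sq (measurable_of_countable _ |>.comp
    (Measurable.ite (hB (measurableSet_singleton 0)) hX hU)).aestronglyMeasurable).2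
    (integral_comp_randomizedResponse hX hB hU hq0 hq1 hX1 hX0 hγ hB0 hUk hXB hUB
      fun j => (j : ℝ) ^ 2).1

lemma integral_randomizedResponse :
    ∫ ω, ((if B ω = 0 then X ω else U ω : ℕ) : ℝ) ∂μ = (1 - γ) * (m + q) + γ * (k / 2) := by
  rw [(integral_comp_randomizedResponse hX hB hU hq0 hq1 hX1 hX0 hγ hB0 hUk hXB hUB
    fun j => (j : ℝ)).2, sum_range_succ_natCast]
  field_simp
  push_cast
  ring

lemma integral_sq_randomizedResponse :
    ∫ ω, ((if B ω = 0 then X ω else U ω : ℕ) : ℝ) ^ 2 ∂μ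
      = (1 - γ) * ((m + q) ^ 2 + q * (1 - q)) + γ * (k * (2 * k + 1) / 6) := by
  rw [(integral_comp_randomizedResponse hX hB hU hq0 hq1 hX1 hX0 hγ hB0 hUk hXB hUB
    fun j => (j : ℝ) ^ 2).2, sum_range_succ_natCast_sq]
  field_simp
  push_cast
  ring

lemma variance_randomizedResponse_le (hγ0 : 0 ≤ γ) (hk : 1 ≤ k) (hmq : m + q ≤ k) :
    Var[fun ω => ((if B ω = 0 then X ω else U ω : ℕ) : ℝ); μ] ≤ 1 / 4 + γ * k ^ 2 / 2 := by
  set M : ℝ := m + q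
  have hk' : (1 : ℝ) ≤ k := by exact_mod_cast hk
  have htotal : Var[fun ω => ((if B ω = 0 then X ω else U ω : ℕ) : ℝ); μ]
      = (1 - γ) * (q * (1 - q)) + γ * ((k ^ 2 + 2 * k) / 12)
        + γ * (1 - γ) * (M - k / 2) ^ 2 := by
    rw [variance_eq_sub (memLp_two_randomizedResponse hX hB hU hq0 hq1 hX1 hX0 hγ hB0 hUk hXB hUB)]
    simp only [Pi.pow_apply]
    rw [integral_sq_randomizedResponse hX hB hU hq0 hq1 hX1 hX0 hγ hB0 hUk hXB hUB,
      integral_randomizedResponse hX hB hU hq0 hq1 hX1 hX0 hγ hB0 hUk hXB hUB]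
    ring
  have hq : q * (1 - q) ≤ 1 / 4 := by nlinarith [sq_nonneg (2 * q - 1)]
  have hM : (M - k / 2) ^ 2 ≤ k ^ 2 / 4 := by
    nlinarith [show (0 : ℝ) ≤ m from m.cast_nonneg]
  have hunif : (k ^ 2 + 2 * k : ℝ) / 12 ≤ k ^ 2 / 4 := by nlinarith
  rw [htotal]
  nlinarith [mul_le_mul_of_nonneg_left hq (by linarith : 0 ≤ 1 - γ),
    mul_le_mul_of_nonneg_left hunif hγ0,
    mul_le_mul_of_nonneg_left hM (mul_nonneg hγ0 (by linarith : 0 ≤ 1 - γ)),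
    mul_nonneg (mul_nonneg hγ0 hγ0) (sq_nonneg (k : ℝ))]

end RandomizedResponse

lemma randomizedResponse_of_rounding_moments {Ω : Type*} [MeasurableSpace Ω] {μ : Measure Ω}
    [IsProbabilityMeasure μ] {X B U : Ω → ℕ} {k : ℕ} {x γ : ℝ} (hk : 1 ≤ k)
    (hx : x ∈ Set.Icc (0 : ℝ) 1) (hγ : γ ∈ Set.Ioo (0 : ℝ) 1)
    (hX : Measurable X) (hB : Measurable B) (hU : Measurable U)
    (hX1 : μ {ω | X ω = ⌊x * k⌋₊ + 1} = ENNReal.ofReal (x * k - ⌊x * k⌋₊))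
    (hX0 : μ {ω | X ω = ⌊x * k⌋₊} = ENNReal.ofReal (1 - (x * k - ⌊x * k⌋₊)))
    (hB0 : μ {ω | B ω = 0} = ENNReal.ofReal (1 - γ))
    (hUk : ∀ j ≤ k, μ {ω | U ω = j} = ((k : ℝ≥0∞) + 1)⁻¹)
    (hXB : IndepFun X B μ) (hUB : IndepFun U B μ) :
    MemLp (fun ω => ((if B ω = 0 then X ω else U ω : ℕ) : ℝ)) 2 μ ∧
      ∫ ω, ((if B ω = 0 then X ω else U ω : ℕ) : ℝ) ∂μ = (1 - γ) * (x * k) + γ * (k / 2) ∧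
      Var[fun ω => ((if B ω = 0 then X ω else U ω : ℕ) : ℝ); μ] ≤ 1 / 4 + γ * k ^ 2 / 2 := by
  have hxk : 0 ≤ x * k := mul_nonneg hx.1 k.cast_nonneg
  have hq0 : 0 ≤ x * k - ⌊x * k⌋₊ := sub_nonneg.2 (Nat.floor_le hxk)
  have hq1 : x * k - ⌊x * k⌋₊ ≤ 1 := by linarith [Nat.lt_floor_add_one (x * k)]
  have hmq : ⌊x * k⌋₊ + (x * k - ⌊x * k⌋₊) ≤ k := by
    nlinarith [hx.2, show (0 : ℝ) ≤ k from k.cast_nonneg]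
  refine ⟨memLp_two_randomizedResponse hX hB hU hq0 hq1 hX1 hX0 hγ.2.le hB0 hUk hXB hUB, ?_,
    variance_randomizedResponse_le hX hB hU hq0 hq1 hX1 hX0 hγ.2.le hB0 hUk hXB hUB hγ.1.le hk hmq⟩
  rw [integral_randomizedResponse hX hB hU hq0 hq1 hX1 hX0 hγ.2.le hB0 hUk hXB hUB]
  ring

lemma ProbabilityTheory.iIndepFun.indepFun_randomizedResponse {Ω ι : Type*} [MeasurableSpace Ω]
    {μ : Measure Ω} {X B U : ι → Ω → ℕ} (hX : ∀ i, Measurable (X i))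
    (hB : ∀ i, Measurable (B i)) (hU : ∀ i, Measurable (U i))
    (h : iIndepFun (fun p : ι × Fin 3 => ![X p.1, B p.1, U p.1] p.2) μ) :
    (∀ i, IndepFun (X i) (B i) μ ∧ IndepFun (U i) (B i) μ) ∧
      Pairwise fun i j => IndepFun (fun ω => ((if B i ω = 0 then X i ω else U i ω : ℕ) : ℝ))
        (fun ω => ((if B j ω = 0 then X j ω else U j ω : ℕ) : ℝ)) μ := by
  have hmeas : ∀ p : ι × Fin 3, Measurable (![X p.1, B p.1, U p.1] p.2) := by
    rintro ⟨i, c⟩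
    fin_cases c
    exacts [hX i, hB i, hU i]
  have hg : Measurable fun v : Fin 3 → ℕ => ((if v 1 = 0 then v 0 else v 2 : ℕ) : ℝ) :=
    (measurable_of_countable _).comp <| Measurable.ite
      (measurable_pi_apply 1 (measurableSet_singleton 0)) (measurable_pi_apply 0)
      (measurable_pi_apply 2)
  refine ⟨fun i => ⟨?_, ?_⟩, h.pairwise_indepFun_comp_row hmeas hg⟩
  · simpa using h.indepFun (show ((i, 0) : ι × Fin 3) ≠ (i, 1) by simp)
  · simpa using h.indepFun (show ((i, 2) : ι × Fin 3) ≠ (i, 1) by simp)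

section AffineSum

variable {Ω ι : Type*} [MeasurableSpace Ω] [Fintype ι] {μ : Measure Ω} [IsProbabilityMeasure μ]
  {Y : ι → Ω → ℝ}

lemma integral_const_mul_sum_add_const (hY : ∀ i, Integrable (Y i) μ) (c d : ℝ) :
    ∫ ω, (c * ∑ i, Y i ω + d) ∂μ = c * ∑ i, ∫ ω, Y i ω ∂μ + d := by
  rw [integral_add ((integrable_finsetSum _ fun i _ => hY i).const_mul _) (integrable_const _),
    integral_const_mul, integral_finsetSum _ fun i _ => hY i, integral_const, probReal_univ,
    one_smul]

lemma ProbabilityTheory.variance_const_mul_sum_add_const (hY : ∀ i, MemLp (Y i) 2 μ)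
    (hind : Pairwise fun i j => IndepFun (Y i) (Y j) μ) (c d : ℝ) :
    Var[fun ω => c * ∑ i, Y i ω + d; μ] = c ^ 2 * ∑ i, Var[Y i; μ] := by
  have hmeas i : AEStronglyMeasurable (Y i) μ := (hY i).aestronglyMeasurable
  have hsum : (fun ω => ∑ i, Y i ω) = ∑ i, Y i := by ext ω; simp
  rw [variance_add_const (by fun_prop), variance_const_mul, hsum,
    IndepFun.variance_sum (fun i _ => hY i) fun i _ j _ hij => hind hij]

lemma integral_sq_sub_const_mul_sum_add_const_le (hY : ∀ i, MemLp (Y i) 2 μ)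
    (hind : Pairwise fun i j => IndepFun (Y i) (Y j) μ) (c d : ℝ) {v : ℝ}
    (hv : ∀ i, Var[Y i; μ] ≤ v) :
    ∫ ω, (c * ∑ i, Y i ω + d - (c * ∑ i, ∫ ω, Y i ω ∂μ + d)) ^ 2 ∂μ
      ≤ c ^ 2 * (Fintype.card ι * v) := by
  have hmeas i : AEMeasurable (Y i) μ := (hY i).aemeasurable
  rw [← integral_const_mul_sum_add_const (fun i => (hY i).integrable one_le_two),
    ← variance_eq_integral (by fun_prop), variance_const_mul_sum_add_const hY hind]
  grw [Finset.sum_le_sum fun i _ => hv i]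
  simp

end AffineSum

theorem stmt2_general {Ω : Type*} [MeasurableSpace Ω] (μ : Measure Ω) [IsProbabilityMeasure μ]
    (n k : ℕ) (hk : 1 ≤ k) (γ : ℝ) (hγ : γ ∈ Set.Ioo (0:ℝ) 1)
    (x : Fin n → ℝ) (hx : ∀ i, x i ∈ Set.Icc (0:ℝ) 1)
    (Xr B U : Fin n → Ω → ℕ)
    (hXrmeas : ∀ i, Measurable (Xr i)) (hBmeas : ∀ i, Measurable (B i))
    (hUmeas : ∀ i, Measurable (U i))
    (hXr1 : ∀ i, μ {ω | Xr i ω = ⌊x i * k⌋₊ + 1}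
      = ENNReal.ofReal (x i * k - ⌊x i * k⌋₊))
    (hXr0 : ∀ i, μ {ω | Xr i ω = ⌊x i * k⌋₊}
      = ENNReal.ofReal (1 - (x i * k - ⌊x i * k⌋₊)))
    (hB0 : ∀ i, μ {ω | B i ω = 0} = ENNReal.ofReal (1 - γ))
    (hU : ∀ i, ∀ j ≤ k, μ {ω | U i ω = j} = ((k : ℝ≥0∞) + 1)⁻¹)
    (hindep : iIndepFun
      (fun p : Fin n × Fin 3 => ![Xr p.1, B p.1, U p.1] p.2) μ)
    (y : Fin n → Ω → ℕ) (hy : ∀ i ω, y i ω = if B i ω = 0 then Xr i ω else U i ω)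
    (z : Ω → ℝ)
    (hz : ∀ ω, z ω = ((1 / k) * ∑ i, (y i ω : ℝ) - γ * n / 2) / (1 - γ)) :
    (∫ ω, z ω ∂μ = ∑ i, x i) ∧
      ∫ ω, (z ω - ∑ i, x i) ^ 2 ∂μ
        ≤ ((n : ℝ) / (1 - γ) ^ 2) * (1 / (4 * k ^ 2) + γ / 2) := by
  have hk0 : (0 : ℝ) < k := by exact_mod_cast hk
  have hγ1 : 0 < 1 - γ := sub_pos.2 hγ.2
  obtain ⟨hXUB, hind⟩ := hindep.indepFun_randomizedResponse hXrmeas hBmeas hUmeas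
  simp only [← hy] at hind
  have huser i : MemLp (fun ω => (y i ω : ℝ)) 2 μ ∧
      ∫ ω, (y i ω : ℝ) ∂μ = (1 - γ) * (x i * k) + γ * (k / 2) ∧
      Var[fun ω => (y i ω : ℝ); μ] ≤ 1 / 4 + γ * k ^ 2 / 2 := by
    simp only [hy]
    exact randomizedResponse_of_rounding_moments hk (hx i) hγ (hXrmeas i) (hBmeas i)
      (hUmeas i) (hXr1 i) (hXr0 i) (hB0 i) (hU i) (hXUB i).1 (hXUB i).2
  obtain rfl : z = fun ω => (k * (1 - γ))⁻¹ * ∑ i, (y i ω : ℝ) + -(γ * n / 2 / (1 - γ)) := by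
    ext ω
    rw [hz]
    field_simp
    ring
  have hmean : (k * (1 - γ))⁻¹ * ∑ i, ∫ ω, (y i ω : ℝ) ∂μ + -(γ * n / 2 / (1 - γ)) = ∑ i, x i := by
    simp only [fun i => (huser i).2.1, Finset.sum_add_distrib, Finset.sum_const, Finset.card_univ,
      Fintype.card_fin, nsmul_eq_mul, ← Finset.sum_mul, ← Finset.mul_sum]
    field_simp
    ring
  refine ⟨by rw [integral_const_mul_sum_add_const fun i => (huser i).1.integrable one_le_two,
    hmean], ?_⟩
  calc ∫ ω, ((k * (1 - γ))⁻¹ * ∑ i, (y i ω : ℝ) + -(γ * n / 2 / (1 - γ)) - ∑ i, x i) ^ 2 ∂μ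
      ≤ (k * (1 - γ))⁻¹ ^ 2 * (n * (1 / 4 + γ * k ^ 2 / 2)) := by
        have := integral_sq_sub_const_mul_sum_add_const_le (fun i => (huser i).1) hind
          (k * (1 - γ))⁻¹ (-(γ * n / 2 / (1 - γ))) fun i => (huser i).2.2
        rwa [Fintype.card_fin, hmean] at this
    _ = (n / (1 - γ) ^ 2) * (1 / (4 * k ^ 2) + γ / 2) := by
        field_simp

/-- The single-message shuffle-model protocol for real summation:
each user snaps her input `x i ∈ [0,1]` to a multiple of `1/k` by randomized rounding
(`Xr i`), and reports it unless a `Ber(γ)` coin `B i` comes up `1`, in which case she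
reports a uniform value `U i` on `{0,…,k}`.  The debiased estimator
`z = ((1/k)·Σ y_i − γn/2)/(1−γ)` is unbiased and has mean squared error at most
`(n/(1−γ)²)·(1/(4k²) + γ/2)`. -/
theorem stmt2 {Ω : Type*} [MeasurableSpace Ω] (μ : Measure Ω) [IsProbabilityMeasure μ]
    (n k : ℕ) (hn : 1 ≤ n) (hk : 1 ≤ k) (γ : ℝ) (hγ : γ ∈ Set.Ioo (0:ℝ) 1)
    (x : Fin n → ℝ) (hx : ∀ i, x i ∈ Set.Icc (0:ℝ) 1)
    (Xr B U : Fin n → Ω → ℕ)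
    (hXrmeas : ∀ i, Measurable (Xr i)) (hBmeas : ∀ i, Measurable (B i))
    (hUmeas : ∀ i, Measurable (U i))
    (hXr1 : ∀ i, μ {ω | Xr i ω = ⌊x i * k⌋₊ + 1}
      = ENNReal.ofReal (x i * k - ⌊x i * k⌋₊))
    (hXr0 : ∀ i, μ {ω | Xr i ω = ⌊x i * k⌋₊}
      = ENNReal.ofReal (1 - (x i * k - ⌊x i * k⌋₊)))
    (hB1 : ∀ i, μ {ω | B i ω = 1} = ENNReal.ofReal γ)
    (hB0 : ∀ i, μ {ω | B i ω = 0} = ENNReal.ofReal (1 - γ))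
    (hU : ∀ i, ∀ j ≤ k, μ {ω | U i ω = j} = ((k : ℝ≥0∞) + 1)⁻¹)
    (hindep : iIndepFun
      (fun p : Fin n × Fin 3 => ![Xr p.1, B p.1, U p.1] p.2) μ)
    (y : Fin n → Ω → ℕ) (hy : ∀ i ω, y i ω = if B i ω = 0 then Xr i ω else U i ω)
    (z : Ω → ℝ)
    (hz : ∀ ω, z ω = ((1 / k) * ∑ i, (y i ω : ℝ) - γ * n / 2) / (1 - γ)) :
    (∫ ω, z ω ∂μ = ∑ i, x i) ∧
      ∫ ω, (z ω - ∑ i, x i) ^ 2 ∂μ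
        ≤ ((n : ℝ) / (1 - γ) ^ 2) * (1 / (4 * k ^ 2) + γ / 2) :=
  stmt2_general μ n k hk γ hγ x hx Xr B U hXrmeas hBmeas hUmeas hXr1 hXr0 hB0 hU hindep y hy z hz
end

section
/- Let k ∈ ℕ with k ≥ 1 and let I = { m/k − 1/(2k) : m ∈ {1,…,k} } be the set of midpoints of the k subintervals of [0,1] of length 1/k. Then for every b ∈ I, (1/k)·Σ_{a ∈ I, a ≠ b} (|a − b| − 1/(2k))² ≥ (1/48)·(1 − 1/k²). -/
/-!
Reindex the midpoints as `(i + 1/2)/k` for `i < k` and let `b` be the `j`-th one, so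
`k = j + 1 + q`. The points `a ≠ b` sit at distances `d/k` with `1 ≤ d ≤ j` on the left and
`1 ≤ d ≤ q` on the right, so the sum is `(S j + S q)/k²` where `S n = ∑_{d ≤ n} (d - 1/2)²`
`= n(4n² - 1)/12`. The claim becomes the cubic inequality `k³ - k ≤ 4(j(4j² - 1) + q(4q² - 1))`,
which is convexity of `n ↦ 4n³ - n` once `j + q ≥ 2`, and a direct check otherwise.
-/

open Finset

theorem sum_range_add_half_sq (n : ℕ) :
    ∑ i ∈ range n, ((i : ℝ) + 1 / 2) ^ 2 = n * (4 * (n : ℝ) ^ 2 - 1) / 12 := by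
  induction n with
  | zero => simp
  | succ n ih => rw [sum_range_succ, ih]; push_cast; ring

theorem sum_range_erase_abs_sub_half_sq (p q : ℕ) :
    ∑ m ∈ (range (p + 1 + q)).erase p, (|(m : ℝ) - p| - 1 / 2) ^ 2
      = ∑ i ∈ range p, ((i : ℝ) + 1 / 2) ^ 2 + ∑ i ∈ range q, ((i : ℝ) + 1 / 2) ^ 2 := by
  have hp : p ∈ range (p + 1 + q) := mem_range.2 (by omega)
  have hleft : ∀ i ∈ range p,
      (|((p - 1 - i : ℕ) : ℝ) - p| - 1 / 2) ^ 2 = ((i : ℝ) + 1 / 2) ^ 2 := by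
    intro i hi
    rw [mem_range] at hi
    rw [Nat.cast_sub (by omega), Nat.cast_sub (by omega), abs_of_neg (by push_cast; linarith)]
    push_cast; ring
  have hright : ∀ i ∈ range q,
      (|((p + 1 + i : ℕ) : ℝ) - p| - 1 / 2) ^ 2 = ((i : ℝ) + 1 / 2) ^ 2 := by
    intro i _
    rw [abs_of_pos (by push_cast; linarith [(i.cast_nonneg : (0 : ℝ) ≤ i)])]
    push_cast; ring
  rw [← add_right_inj ((|(p : ℝ) - p| - 1 / 2) ^ 2),
    add_sum_erase _ (fun m : ℕ => (|(m : ℝ) - p| - 1 / 2) ^ 2) hp, sum_range_add,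
    sum_range_succ, ← sum_range_reflect, sum_congr rfl hleft, sum_congr rfl hright]
  ring

theorem cube_sub_self_add_add_one_le (p q : ℕ) :
    ((p + q + 1 : ℝ)) ^ 3 - (p + q + 1)
      ≤ 4 * (p * (4 * (p : ℝ) ^ 2 - 1) + q * (4 * (q : ℝ) ^ 2 - 1)) := by
  rcases le_or_gt (p + q) 1 with hs | hs
  · have hp : p ≤ 1 := by omega
    have hq : q ≤ 1 := by omega
    interval_cases p <;> interval_cases q <;> norm_num
  · have hs' : (2 : ℝ) ≤ p + q := by exact_mod_cast hs
    -- with `s = p + q`, the difference is `3s(5s² - 16pq - s - 2) ≥ 3s(s - 2)(s + 1)`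
    nlinarith [sq_nonneg ((p : ℝ) - q),
      mul_nonneg (mul_nonneg (by linarith : (0 : ℝ) ≤ p + q) (sub_nonneg.2 hs'))
        (by linarith : (0 : ℝ) ≤ p + q + 1),
      mul_nonneg (sq_nonneg ((p : ℝ) - q)) (by linarith : (0 : ℝ) ≤ p + q)]

theorem image_Icc_eq_image_range (k : ℕ) :
    (Icc 1 k).image (fun m : ℕ => (m : ℝ) / k - 1 / (2 * k))
      = (range k).image (fun i : ℕ => ((i : ℝ) + 1 / 2) / k) := by
  have hIcc : Icc 1 k = (range k).image (· + 1) := by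
    rw [range_eq_Ico, image_add_right_Ico, zero_add, Ico_add_one_right_eq_Icc]
  rw [hIcc, image_image]
  refine image_congr fun i _ => ?_
  simp only [Function.comp_apply]
  push_cast; ring

theorem sum_image_erase_midpoint {k : ℕ} (hk : 0 < k) (s : Finset ℕ) (j : ℕ) :
    ∑ a ∈ (s.image fun i : ℕ => ((i : ℝ) + 1 / 2) / k).erase (((j : ℝ) + 1 / 2) / k),
        (|a - ((j : ℝ) + 1 / 2) / k| - 1 / (2 * k)) ^ 2
      = (∑ i ∈ s.erase j, (|(i : ℝ) - j| - 1 / 2) ^ 2) / (k : ℝ) ^ 2 := by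
  have hk' : (0 : ℝ) < k := by exact_mod_cast hk
  have hinj : Function.Injective fun i : ℕ => ((i : ℝ) + 1 / 2) / k := by
    intro i i' h
    exact_mod_cast (add_left_inj _).1 ((div_left_inj' hk'.ne').1 h)
  rw [← image_erase hinj, sum_image fun _ _ _ _ h => hinj h, sum_div]
  refine sum_congr rfl fun i _ => ?_
  rw [← sub_div, add_sub_add_right_eq_sub, abs_div, abs_of_pos hk']
  field_simp

theorem stmt4_general (k : ℕ)
    (I : Finset ℝ) (hI : I = (Finset.Icc 1 k).image fun m : ℕ => (m : ℝ) / k - 1 / (2 * k))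
    (b : ℝ) (hb : b ∈ I) :
    (1 / 48) * (1 - 1 / (k : ℝ) ^ 2)
      ≤ (1 / (k : ℝ)) * ∑ a ∈ I.erase b, (|a - b| - 1 / (2 * k)) ^ 2 := by
  rw [hI, image_Icc_eq_image_range] at hb ⊢
  obtain ⟨j, hj, rfl⟩ := mem_image.1 hb
  obtain ⟨q, rfl⟩ : ∃ q, k = j + 1 + q := ⟨k - (j + 1), by rw [mem_range] at hj; omega⟩
  rw [sum_image_erase_midpoint (by omega), sum_range_erase_abs_sub_half_sq,
    sum_range_add_half_sq, sum_range_add_half_sq]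
  have key := cube_sub_self_add_add_one_le j q
  push_cast
  field_simp
  linarith

/-- For `I` the set of midpoints of the `k` subintervals of `[0,1]` of
length `1/k`, and any `b ∈ I`,
`(1/k) Σ_{a ∈ I, a ≠ b} (|a − b| − 1/(2k))² ≥ (1/48)(1 − 1/k²)`. -/
theorem stmt4 (k : ℕ) (hk : 1 ≤ k)
    (I : Finset ℝ) (hI : I = (Finset.Icc 1 k).image fun m : ℕ => (m : ℝ) / k - 1 / (2 * k))
    (b : ℝ) (hb : b ∈ I) :
    (1 / 48) * (1 - 1 / (k : ℝ) ^ 2)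
      ≤ (1 / (k : ℝ)) * ∑ a ∈ I.erase b, (|a - b| - 1 / (2 * k)) ^ 2 :=
  stmt4_general k I hI b hb
end

section
/- Let k ∈ ℕ with k ≥ 1, let I = { m/k − 1/(2k) : m ∈ {1,…,k} }, and for b = m/k − 1/(2k) ∈ I let I(b) = [(m−1)/k, m/k) denote the subinterval of [0,1] of length 1/k containing b. Let R be a Markov kernel from [0,1] to [0,1], and for a, b ∈ I set p_{a,b} = R(a)(I(b)). Let X be uniform on I and, conditionally on X = a, let Y ~ R(a). Then E[(Y − X)²] ≥ Σ_{b ∈ I} min{ (1 − p_{b,b})/(4k³), (1/48)·(1 − 1/k²)·min_{a ∈ I} p_{a,b} }. -/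
/-!
Only the first term of each minimum is needed. Conditionally on `X = b`, the output `Y` misses
`I(b)` with probability `1 - p_{b,b}`, and then `|Y - b| ≥ 1/(2k)` because `b` is the midpoint of
`I(b)`. Hence `E[(Y - X)² | X = b] ≥ (1 - p_{b,b})/(4k²)`, and averaging over the `k` values of `X`
gives `E[(Y - X)²] ≥ Σ_b (1 - p_{b,b})/(4k³)`.
-/

open MeasureTheory ProbabilityTheory
open scoped ENNReal

section

variable {α β ι : Type*} [MeasurableSpace α] [MeasurableSingletonClass α] [MeasurableSpace β]

theorem lintegral_compProd_smul_sum_dirac (κ : Kernel α β) [IsSFiniteKernel κ] (c : ℝ≥0∞)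
    (s : Finset ι) (x : ι → α) {f : α × β → ℝ≥0∞} (hf : Measurable f) :
    ∫⁻ p, f p ∂((c • ∑ i ∈ s, Measure.dirac (x i)).compProd κ)
      = c * ∑ i ∈ s, ∫⁻ y, f (x i, y) ∂κ (x i) := by
  rw [Measure.lintegral_compProd hf, lintegral_smul_measure, lintegral_finsetSum_measure]
  simp only [lintegral_dirac, smul_eq_mul]

end

theorem sq_le_sq_sub_of_notMem_Ico {c r y : ℝ} (hr : 0 ≤ r) (hy : y ∉ Set.Ico (c - r) (c + r)) :
    r ^ 2 ≤ (y - c) ^ 2 := by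
  rw [Set.mem_Ico, not_and_or, not_le, not_lt] at hy
  rcases hy with hy | hy <;> nlinarith

theorem ofReal_sq_mul_measure_compl_Ico_le_lintegral (ν : Measure ℝ) (c : ℝ) {r : ℝ}
    (hr : 0 ≤ r) :
    ENNReal.ofReal (r ^ 2) * ν (Set.Ico (c - r) (c + r))ᶜ
      ≤ ∫⁻ y, ENNReal.ofReal ((y - c) ^ 2) ∂ν := by
  have hf : Measurable fun y : ℝ => ENNReal.ofReal ((y - c) ^ 2) := by fun_prop
  refine le_trans ?_ (mul_meas_ge_le_lintegral hf (ENNReal.ofReal (r ^ 2)))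
  gcongr
  exact fun y hy => ENNReal.ofReal_le_ofReal (sq_le_sq_sub_of_notMem_Ico hr hy)

theorem div_sub_one_div_two_mul_mem_Icc {m k : ℕ} (h1 : 1 ≤ m) (h2 : m ≤ k) :
    (m : ℝ) / k - 1 / (2 * k) ∈ Set.Icc (0 : ℝ) 1 := by
  have hk : (0 : ℝ) < k := by exact_mod_cast h1.trans h2
  have h1' : (1 : ℝ) ≤ m := by exact_mod_cast h1
  have h2' : (m : ℝ) ≤ k := by exact_mod_cast h2
  rw [Set.mem_Icc, sub_nonneg, div_le_div_iff₀ (by positivity) hk, sub_le_iff_le_add,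
    div_le_iff₀ hk]
  constructor <;> nlinarith [div_nonneg zero_le_one (by positivity : (0 : ℝ) ≤ 2 * k)]

section UnitInterval

variable {ν : Measure ℝ} [IsProbabilityMeasure ν] {c : ℝ}

theorem lintegral_ofReal_sq_sub_le_one (hν : ∀ᵐ y ∂ν, y ∈ Set.Icc (0 : ℝ) 1)
    (hc : c ∈ Set.Icc (0 : ℝ) 1) :
    ∫⁻ y, ENNReal.ofReal ((y - c) ^ 2) ∂ν ≤ 1 := by
  calc ∫⁻ y, ENNReal.ofReal ((y - c) ^ 2) ∂ν ≤ ∫⁻ _, 1 ∂ν := by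
        refine lintegral_mono_ae (hν.mono fun y hy => ?_)
        rw [ENNReal.ofReal_le_one]
        nlinarith [hy.1, hy.2, hc.1, hc.2]
    _ = 1 := by simp

theorem sq_mul_one_sub_toReal_measure_Ico_le (hν : ∀ᵐ y ∂ν, y ∈ Set.Icc (0 : ℝ) 1)
    (hc : c ∈ Set.Icc (0 : ℝ) 1) {r : ℝ} (hr : 0 ≤ r) :
    r ^ 2 * (1 - (ν (Set.Ico (c - r) (c + r))).toReal)
      ≤ (∫⁻ y, ENNReal.ofReal ((y - c) ^ 2) ∂ν).toReal := by
  have hfin := (lintegral_ofReal_sq_sub_le_one hν hc).trans_lt ENNReal.one_lt_top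
  have h := ENNReal.toReal_mono hfin.ne (ofReal_sq_mul_measure_compl_Ico_le_lintegral ν c hr)
  rwa [prob_compl_eq_one_sub measurableSet_Ico, ENNReal.toReal_mul,
    ENNReal.toReal_ofReal (sq_nonneg r), ENNReal.toReal_sub_of_le prob_le_one ENNReal.one_ne_top,
    ENNReal.toReal_one] at h

end UnitInterval

/-- Let `I = {m/k − 1/(2k) : m ∈ {1,…,k}}` be the midpoints of the `k`
subintervals of `[0,1]` of length `1/k`, `I(b) = [(m−1)/k, m/k)` the subinterval containing
the midpoint `b = m/k − 1/(2k)`, and `R` a Markov kernel from `[0,1]` to `[0,1]`, with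
`p_{a,b} = R(a)(I(b))`.  If `X` is uniform on `I` and, given `X = a`, `Y ~ R(a)`, then
`E[(Y − X)²] ≥ Σ_{b ∈ I} min {(1 − p_{b,b})/(4k³), (1/48)(1 − 1/k²) min_{a ∈ I} p_{a,b}}`. -/
theorem stmt5 (k : ℕ) (hk : 1 ≤ k)
    (R : Kernel ℝ ℝ) [IsMarkovKernel R] (hR : ∀ x, R x (Set.Icc 0 1) = 1)
    (mid : ℕ → ℝ) (hmid : ∀ m, mid m = (m : ℝ) / k - 1 / (2 * k))
    (intv : ℕ → Set ℝ) (hintv : ∀ m, intv m = Set.Ico (((m : ℝ) - 1) / k) ((m : ℝ) / k))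
    (μI : Measure ℝ)
    (hμI : μI = (k : ℝ≥0∞)⁻¹ • ∑ m ∈ Finset.Icc 1 k, Measure.dirac (mid m)) :
    ∑ m ∈ Finset.Icc 1 k,
        min ((1 - (R (mid m) (intv m)).toReal) / (4 * (k : ℝ) ^ 3))
          ((1 / 48) * (1 - 1 / (k : ℝ) ^ 2) *
            (Finset.Icc 1 k).inf' (Finset.nonempty_Icc.mpr hk)
              (fun a => (R (mid a) (intv m)).toReal))
      ≤ ∫ p : ℝ × ℝ, (p.2 - p.1) ^ 2 ∂(μI.compProd R) := by
  subst hμI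
  have hR_ae (x : ℝ) : ∀ᵐ y ∂(R x), y ∈ Set.Icc (0 : ℝ) 1 :=
    mem_ae_iff.2 ((prob_compl_eq_zero_iff measurableSet_Icc).2 (hR x))
  have hmid_mem {m : ℕ} (hm : m ∈ Finset.Icc 1 k) : mid m ∈ Set.Icc (0 : ℝ) 1 := by
    obtain ⟨h1, h2⟩ := Finset.mem_Icc.1 hm
    exact hmid m ▸ div_sub_one_div_two_mul_mem_Icc h1 h2
  have hintv_eq (m : ℕ) : intv m = Set.Ico (mid m - 1 / (2 * k)) (mid m + 1 / (2 * k)) := by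
    rw [hintv, hmid]
    congr 1 <;> ring
  set g : ℕ → ℝ≥0∞ := fun m => ∫⁻ y, ENNReal.ofReal ((y - mid m) ^ 2) ∂(R (mid m))
  have hg_ne_top {m : ℕ} (hm : m ∈ Finset.Icc 1 k) : g m ≠ ⊤ :=
    ((lintegral_ofReal_sq_sub_le_one (hR_ae _) (hmid_mem hm)).trans_lt ENNReal.one_lt_top).ne
  have hintegral : ∫ p : ℝ × ℝ, (p.2 - p.1) ^ 2 ∂(((k : ℝ≥0∞)⁻¹ •
      ∑ m ∈ Finset.Icc 1 k, Measure.dirac (mid m)).compProd R)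
        = ∑ m ∈ Finset.Icc 1 k, (k : ℝ)⁻¹ * (g m).toReal := by
    rw [integral_eq_lintegral_of_nonneg_ae (Filter.Eventually.of_forall fun p => sq_nonneg _)
      (by fun_prop), lintegral_compProd_smul_sum_dirac R _ _ _ (by fun_prop),
      ENNReal.toReal_mul, ENNReal.toReal_sum fun m hm => hg_ne_top hm, Finset.mul_sum]
    simp
  rw [hintegral]
  refine Finset.sum_le_sum fun m hm => (min_le_left _ _).trans ?_
  have hlower := sq_mul_one_sub_toReal_measure_Ico_le (hR_ae (mid m)) (hmid_mem hm)
    (by positivity : (0 : ℝ) ≤ 1 / (2 * k))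
  rw [← hintv_eq] at hlower
  calc (1 - (R (mid m) (intv m)).toReal) / (4 * (k : ℝ) ^ 3)
      = (k : ℝ)⁻¹ * ((1 / (2 * k)) ^ 2 * (1 - (R (mid m) (intv m)).toReal)) := by
        field_simp; ring
    _ ≤ (k : ℝ)⁻¹ * (g m).toReal := by gcongr
end

section
/- Let ε₀ > 0. The total variation similarity of the ε₀-LDP Laplace mechanism on [0,1], whose output distribution on input x ∈ [0,1] has density μ_x(y) = (ε₀/2)·e^{−ε₀|y−x|} on ℝ, equals e^{−ε₀/2}; that is, ∫_ℝ inf_{x ∈ [0,1]} (ε₀/2)·e^{−ε₀|y−x|} dy = e^{−ε₀/2}. -/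
open MeasureTheory

lemma stmt9_key (ε₀ : ℝ) (hε₀ : 0 < ε₀) (y : ℝ) :
    (⨅ x : Set.Icc (0:ℝ) 1, ε₀ / 2 * Real.exp (-(ε₀ * |y - (x : ℝ)|)))
      = ε₀ / 2 * Real.exp (-(ε₀ * (|y - 1/2| + 1/2))) := by
  apply le_antisymm
  · -- choose the farthest endpoint
    rcases le_total y (1/2) with h | h
    · have h1 : |y - (1:ℝ)| = |y - 1/2| + 1/2 := by
        rw [abs_of_nonpos (by linarith), abs_of_nonpos (by linarith)]; ring
      calc (⨅ x : Set.Icc (0:ℝ) 1, ε₀ / 2 * Real.exp (-(ε₀ * |y - (x : ℝ)|)))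
          ≤ ε₀ / 2 * Real.exp (-(ε₀ * |y - ((⟨1, by norm_num⟩ : Set.Icc (0:ℝ) 1) : ℝ)|)) := by
            apply ciInf_le
            exact ⟨0, by rintro _ ⟨x, rfl⟩; positivity⟩
        _ = ε₀ / 2 * Real.exp (-(ε₀ * (|y - 1/2| + 1/2))) := by rw [← h1]
    · have h1 : |y - (0:ℝ)| = |y - 1/2| + 1/2 := by
        rw [sub_zero, abs_of_nonneg (by linarith), abs_of_nonneg (by linarith)]; ring
      calc (⨅ x : Set.Icc (0:ℝ) 1, ε₀ / 2 * Real.exp (-(ε₀ * |y - (x : ℝ)|)))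
          ≤ ε₀ / 2 * Real.exp (-(ε₀ * |y - ((⟨0, by norm_num⟩ : Set.Icc (0:ℝ) 1) : ℝ)|)) := by
            apply ciInf_le
            exact ⟨0, by rintro _ ⟨x, rfl⟩; positivity⟩
        _ = ε₀ / 2 * Real.exp (-(ε₀ * (|y - 1/2| + 1/2))) := by rw [← h1]
  · apply le_ciInf
    rintro ⟨x, hx0, hx1⟩
    have hle : |y - x| ≤ |y - 1/2| + 1/2 := by
      calc |y - x| = |(y - 1/2) + (1/2 - x)| := by ring_nf
        _ ≤ |y - 1/2| + |1/2 - x| := abs_add_le _ _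
        _ ≤ |y - 1/2| + 1/2 := by
            have : |1/2 - x| ≤ 1/2 := abs_le.mpr ⟨by linarith, by linarith⟩
            linarith
    have := Real.exp_le_exp.mpr (by nlinarith : -(ε₀ * (|y - 1/2| + 1/2)) ≤ -(ε₀ * |y - x|))
    nlinarith [this]

/-- The total variation similarity of the `ε₀`-LDP Laplace mechanism on
`[0,1]`, with densities `μ_x(y) = (ε₀/2)·e^{−ε₀|y−x|}`, is
`∫_ℝ inf_{x ∈ [0,1]} (ε₀/2)·e^{−ε₀|y−x|} dy = e^{−ε₀/2}`. -/
theorem stmt9 (ε₀ : ℝ) (hε₀ : 0 < ε₀) :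
    ∫ y : ℝ, ⨅ x : Set.Icc (0:ℝ) 1, ε₀ / 2 * Real.exp (-(ε₀ * |y - (x : ℝ)|))
      = Real.exp (-(ε₀ / 2)) := by
  simp only [stmt9_key ε₀ hε₀]
  have h1 : ∀ y : ℝ, ε₀ / 2 * Real.exp (-(ε₀ * (|y - 1/2| + 1/2)))
      = (ε₀ / 2 * Real.exp (-(ε₀ / 2))) * Real.exp (-(ε₀ * |y - 1/2|)) := by
    intro y
    rw [show -(ε₀ * (|y - 1/2| + 1/2)) = -(ε₀ * |y - 1/2|) + -(ε₀/2) by ring, Real.exp_add]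
    ring
  simp only [h1]
  rw [integral_const_mul]
  have h2 : ∫ y : ℝ, Real.exp (-(ε₀ * |y - 1/2|)) = 2 / ε₀ := by
    have := MeasureTheory.integral_sub_right_eq_self
      (fun t : ℝ => Real.exp (-(ε₀ * |t|))) (μ := volume) (1/2 : ℝ)
    rw [show (fun y : ℝ => Real.exp (-(ε₀ * |y - 1/2|)))
        = fun y : ℝ => Real.exp (-(ε₀ * |y - 1/2|)) from rfl]
    calc ∫ y : ℝ, Real.exp (-(ε₀ * |y - 1/2|)) = ∫ t : ℝ, Real.exp (-(ε₀ * |t|)) := this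
      _ = 2 * ∫ t in Set.Ioi (0:ℝ), Real.exp (-(ε₀ * t)) :=
          integral_comp_abs (f := fun t => Real.exp (-(ε₀ * t)))
      _ = 2 * (ε₀⁻¹ • ∫ t in Set.Ioi (ε₀ * 0), Real.exp (-t)) := by
          rw [MeasureTheory.integral_comp_mul_left_Ioi (fun t => Real.exp (-t)) 0 hε₀]
      _ = 2 / ε₀ := by
          rw [mul_zero, integral_exp_neg_Ioi, neg_zero, Real.exp_zero, smul_eq_mul]
          field_simp
  rw [h2]
  field_simp
end

section
/- Let σ > 0. The total variation similarity of the Gaussian mechanism with variance σ² on [0,1], whose output distribution on input x ∈ [0,1] has density μ_x(y) = (1/√(2πσ²))·e^{−(y−x)²/(2σ²)} on ℝ, equals 2·P[N(0,σ²) ≤ −1/2]; that is, ∫_ℝ inf_{x ∈ [0,1]} (1/√(2πσ²))·e^{−(y−x)²/(2σ²)} dy = 2·P[N(0,σ²) ≤ −1/2], where N(0,σ²) denotes a centered Gaussian random variable with variance σ². -/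
open MeasureTheory ProbabilityTheory
open scoped NNReal

/-!
For fixed `y` the Gaussian density `φ(y - x)` decreases in `|y - x|`, so its infimum over
`x ∈ [a, b]` is attained at the endpoint farther from `y`: it equals `min (φ(y - a)) (φ(y - b))`.
Splitting the integral at the midpoint `(a + b)/2`, each half is a Gaussian tail beyond
distance `(b - a)/2` from the mean, and the two tails are equal by symmetry.
-/

open Set

namespace ProbabilityTheory

variable {v : ℝ≥0}

lemma gaussianPDFReal_le_of_sq_le {μ μ' y : ℝ} (h : (y - μ) ^ 2 ≤ (y - μ') ^ 2) :
    gaussianPDFReal μ' v y ≤ gaussianPDFReal μ v y := by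
  unfold gaussianPDFReal
  gcongr

lemma gaussianPDFReal_le_of_le_midpoint {a b y : ℝ} (hab : a ≤ b) (hy : y ≤ (a + b) / 2) :
    gaussianPDFReal b v y ≤ gaussianPDFReal a v y :=
  gaussianPDFReal_le_of_sq_le (by nlinarith [mul_nonneg (sub_nonneg.2 hab) (sub_nonneg.2 hy)])

lemma gaussianPDFReal_le_of_midpoint_le {a b y : ℝ} (hab : a ≤ b) (hy : (a + b) / 2 ≤ y) :
    gaussianPDFReal a v y ≤ gaussianPDFReal b v y :=
  gaussianPDFReal_le_of_sq_le (by nlinarith [mul_nonneg (sub_nonneg.2 hab) (sub_nonneg.2 hy)])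

lemma iInf_Icc_gaussianPDFReal {a b : ℝ} (hab : a ≤ b) (y : ℝ) :
    ⨅ x : Icc a b, gaussianPDFReal x v y
      = min (gaussianPDFReal a v y) (gaussianPDFReal b v y) := by
  have : Nonempty (Icc a b) := ⟨⟨a, left_mem_Icc.2 hab⟩⟩
  have hbdd : BddBelow (range fun x : Icc a b ↦ gaussianPDFReal x v y) :=
    ⟨0, by rintro _ ⟨x, rfl⟩; exact gaussianPDFReal_nonneg _ _ _⟩
  refine le_antisymm (le_min ?_ ?_) (le_ciInf ?_)
  · exact ciInf_le hbdd ⟨a, left_mem_Icc.2 hab⟩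
  · exact ciInf_le hbdd ⟨b, right_mem_Icc.2 hab⟩
  · rintro ⟨x, hax, hxb⟩
    rcases le_total y ((a + b) / 2) with hy | hy
    · exact (min_le_right _ _).trans (gaussianPDFReal_le_of_le_midpoint hxb (by linarith))
    · exact (min_le_left _ _).trans (gaussianPDFReal_le_of_midpoint_le hax (by linarith))

lemma setIntegral_gaussianPDFReal (hv : v ≠ 0) (μ : ℝ) (s : Set ℝ) :
    ∫ y in s, gaussianPDFReal μ v y = (gaussianReal μ v s).toReal := by
  rw [gaussianReal_apply_eq_integral μ hv,
    ENNReal.toReal_ofReal (setIntegral_nonneg_of_ae (ae_of_all _ (gaussianPDFReal_nonneg μ v)))]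

lemma gaussianReal_Iic (μ c : ℝ) :
    gaussianReal μ v (Iic c) = gaussianReal 0 v (Iic (c - μ)) := by
  rw [← sub_self μ, ← gaussianReal_map_sub_const μ,
    Measure.map_apply (measurable_sub_const μ) measurableSet_Iic]
  congr 1
  ext y
  simp

lemma gaussianReal_Ioi (hv : v ≠ 0) (μ c : ℝ) :
    gaussianReal μ v (Ioi c) = gaussianReal 0 v (Iic (μ - c)) := by
  have := nullSingletonClass_gaussianReal (μ := 0) hv
  rw [← measure_congr Iio_ae_eq_Iic, ← sub_self μ, ← gaussianReal_map_const_sub μ,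
    Measure.map_apply (measurable_const_sub μ) measurableSet_Iio]
  congr 1
  ext y
  simp

lemma integral_min_gaussianPDFReal (hv : v ≠ 0) {a b : ℝ} (hab : a ≤ b) :
    ∫ y, min (gaussianPDFReal a v y) (gaussianPDFReal b v y)
      = 2 * (gaussianReal 0 v (Iic (-((b - a) / 2)))).toReal := by
  have hint : Integrable fun y ↦ min (gaussianPDFReal a v y) (gaussianPDFReal b v y) :=
    (integrable_gaussianPDFReal a v).inf (integrable_gaussianPDFReal b v)
  have hleft : ∫ y in Iic ((a + b) / 2), min (gaussianPDFReal a v y) (gaussianPDFReal b v y)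
      = ∫ y in Iic ((a + b) / 2), gaussianPDFReal b v y :=
    setIntegral_congr_fun measurableSet_Iic fun y (hy : y ≤ (a + b) / 2) ↦
      min_eq_right (gaussianPDFReal_le_of_le_midpoint hab hy)
  have hright : ∫ y in Ioi ((a + b) / 2), min (gaussianPDFReal a v y) (gaussianPDFReal b v y)
      = ∫ y in Ioi ((a + b) / 2), gaussianPDFReal a v y :=
    setIntegral_congr_fun measurableSet_Ioi fun y (hy : (a + b) / 2 < y) ↦
      min_eq_left (gaussianPDFReal_le_of_midpoint_le hab hy.le)
  rw [← intervalIntegral.integral_Iic_add_Ioi hint.integrableOn hint.integrableOn, hleft, hright,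
    setIntegral_gaussianPDFReal hv, setIntegral_gaussianPDFReal hv, gaussianReal_Iic,
    gaussianReal_Ioi hv, two_mul]
  congr 4 <;> ring

end ProbabilityTheory

/-- The total variation similarity of the Gaussian mechanism with
variance `σ²` on `[0,1]`, with densities `μ_x(y) = (1/√(2πσ²))·e^{−(y−x)²/(2σ²)}`, is
`∫_ℝ inf_{x ∈ [0,1]} μ_x(y) dy = 2·P[N(0,σ²) ≤ −1/2]`. -/
theorem stmt10 (σ : ℝ) (hσ : 0 < σ) :
    ∫ y : ℝ, ⨅ x : Set.Icc (0:ℝ) 1,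
        (1 / Real.sqrt (2 * Real.pi * σ ^ 2)) * Real.exp (-((y - (x : ℝ)) ^ 2 / (2 * σ ^ 2)))
      = 2 * (gaussianReal 0 ⟨σ ^ 2, sq_nonneg σ⟩ (Set.Iic (-(1 / 2)))).toReal := by
  set v : ℝ≥0 := ⟨σ ^ 2, sq_nonneg σ⟩
  have hv : v ≠ 0 := fun h ↦ (pow_pos hσ 2).ne' (congrArg NNReal.toReal h)
  have hdensity : ∀ x y : ℝ, (1 / Real.sqrt (2 * Real.pi * σ ^ 2)) *
      Real.exp (-((y - x) ^ 2 / (2 * σ ^ 2))) = gaussianPDFReal x v y := by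
    intro x y
    rw [gaussianPDFReal, one_div, neg_div]
    rfl
  simp only [hdensity, iInf_Icc_gaussianPDFReal zero_le_one,
    integral_min_gaussianPDFReal hv zero_le_one, sub_zero]
end

section
/- Let (Y, ν) be a measure space with ν σ-finite, let γ ∈ (0,1], ε₀ ≥ 0, ε ≥ 0, and let μ, μ', ω be probability densities on Y with respect to ν satisfying γ·ω(y) ≤ μ(y) ≤ e^{ε₀}·γ·ω(y) and γ·ω(y) ≤ μ'(y) ≤ e^{ε₀}·γ·ω(y) for ν-a.e. y (as holds when ω is the blanket distribution and γ the total variation similarity of an ε₀-LDP local randomizer with output densities including μ and μ'). Let W ~ ω and L = (μ(W) − e^ε·μ'(W))/ω(W). Then: (1) E[L] = 1 − e^ε; (2) γ·e^{−ε₀}·(1 − e^{ε+2ε₀}) ≤ L ≤ γ·e^{ε₀}·(1 − e^{ε−2ε₀}) almost surely; (3) E[L²] ≤ γ·e^{ε₀}·(e^{2ε} + 1) − 2·γ²·e^{ε−2ε₀}. -/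
/-!
Changing variables to `ν`, `ω · L = μ - e^ε μ'` a.e., since `μ` and `μ'` vanish wherever `ω`
does; this gives `E[L]`. Where `ω > 0` the ratios `μ / ω` and `μ' / ω` lie in `[γ, e^{ε₀} γ]`,
so `L` is squeezed between affine expressions in them, and expanding
`ω L² = (μ - e^ε μ')² / ω` bounds it by a combination of `μ` and `μ'` whose integral is explicit.
-/

open MeasureTheory Real
open scoped ENNReal

section Sandwich

variable {γ K c w m m' : ℝ}

lemma div_mem_Icc_of_sandwich (hw : 0 < w) (hlb : γ * w ≤ m) (hub : m ≤ K * (γ * w)) :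
    m / w ∈ Set.Icc γ (K * γ) :=
  ⟨(le_div_iff₀ hw).2 hlb, (div_le_iff₀ hw).2 (by rwa [mul_assoc])⟩

lemma sub_mul_div_mem_Icc_of_sandwich (hc : 0 ≤ c) (hw : 0 < w)
    (hlb : γ * w ≤ m) (hub : m ≤ K * (γ * w)) (hlb' : γ * w ≤ m') (hub' : m' ≤ K * (γ * w)) :
    (m - c * m') / w ∈ Set.Icc (γ - c * (K * γ)) (K * γ - c * γ) := by
  obtain ⟨h₁, h₂⟩ := div_mem_Icc_of_sandwich hw hlb hub
  obtain ⟨h₃, h₄⟩ := div_mem_Icc_of_sandwich hw hlb' hub'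
  rw [sub_div, mul_div_assoc]
  constructor <;> linarith [mul_le_mul_of_nonneg_left h₃ hc, mul_le_mul_of_nonneg_left h₄ hc]

lemma sq_sub_mul_le_of_mem_Icc {a b : ℝ} (hγ : 0 ≤ γ) (hc : 0 ≤ c)
    (ha : a ∈ Set.Icc γ (K * γ)) (hb : b ∈ Set.Icc γ (K * γ)) :
    (a - c * b) ^ 2 ≤ K * γ * a + (c ^ 2 * K * γ - 2 * c * γ) * b := by
  have haa : 0 ≤ a * (K * γ - a) := mul_nonneg (by linarith [ha.1]) (sub_nonneg.2 ha.2)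
  have hab : 0 ≤ c * (b * (a - γ)) :=
    mul_nonneg hc (mul_nonneg (by linarith [hb.1]) (sub_nonneg.2 ha.1))
  have hbb : 0 ≤ c ^ 2 * (b * (K * γ - b)) :=
    mul_nonneg (sq_nonneg c) (mul_nonneg (hγ.trans hb.1) (sub_nonneg.2 hb.2))
  linarith

lemma mul_sq_sub_mul_div_le_of_sandwich (hγ : 0 ≤ γ) (hc : 0 ≤ c) (hw : 0 ≤ w)
    (hlb : γ * w ≤ m) (hub : m ≤ K * (γ * w)) (hlb' : γ * w ≤ m') (hub' : m' ≤ K * (γ * w)) :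
    w * ((m - c * m') / w) ^ 2 ≤ K * γ * m + (c ^ 2 * K * γ - 2 * c * γ) * m' := by
  rcases hw.eq_or_lt with rfl | hw
  · have : m = 0 := by linarith
    have : m' = 0 := by linarith
    simp [*]
  calc w * ((m - c * m') / w) ^ 2
      = w * (m / w - c * (m' / w)) ^ 2 := by rw [sub_div, mul_div_assoc]
    _ ≤ w * (K * γ * (m / w) + (c ^ 2 * K * γ - 2 * c * γ) * (m' / w)) :=
      mul_le_mul_of_nonneg_left (sq_sub_mul_le_of_mem_Icc hγ hc
        (div_mem_Icc_of_sandwich hw hlb hub) (div_mem_Icc_of_sandwich hw hlb' hub')) hw.le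
    _ = K * γ * m + (c ^ 2 * K * γ - 2 * c * γ) * m' := by field_simp

end Sandwich

section Amplification

variable {Y : Type*} [MeasurableSpace Y] {ν : Measure Y} {ω μ μ' : Y → ℝ} {γ K c : ℝ}

theorem integral_withDensity_ofReal (hω : AEMeasurable ω ν) (hω_nonneg : 0 ≤ᵐ[ν] ω)
    (f : Y → ℝ) :
    ∫ y, f y ∂ν.withDensity (fun y => ENNReal.ofReal (ω y)) = ∫ y, ω y * f y ∂ν := by
  rw [integral_withDensity_eq_integral_toReal_smul₀ hω.ennreal_ofReal
    (.of_forall fun _ => ENNReal.ofReal_lt_top)]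
  refine integral_congr_ae ?_
  filter_upwards [hω_nonneg] with y hy
  rw [ENNReal.toReal_ofReal hy, smul_eq_mul]

variable (hμ : ∀ᵐ y ∂ν, γ * ω y ≤ μ y ∧ μ y ≤ K * (γ * ω y))
  (hμ' : ∀ᵐ y ∂ν, γ * ω y ≤ μ' y ∧ μ' y ≤ K * (γ * ω y))
include hμ hμ'

theorem integral_withDensity_sub_mul_div (hω : AEMeasurable ω ν) (hω_nonneg : 0 ≤ᵐ[ν] ω)
    (hμ1 : ∫ y, μ y ∂ν = 1) (hμ'1 : ∫ y, μ' y ∂ν = 1) :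
    ∫ y, (μ y - c * μ' y) / ω y ∂ν.withDensity (fun y => ENNReal.ofReal (ω y)) = 1 - c := by
  have hμint : Integrable μ ν := .of_integral_ne_zero (hμ1 ▸ one_ne_zero)
  have hμ'int : Integrable μ' ν := .of_integral_ne_zero (hμ'1 ▸ one_ne_zero)
  rw [integral_withDensity_ofReal hω hω_nonneg]
  calc ∫ y, ω y * ((μ y - c * μ' y) / ω y) ∂ν = ∫ y, μ y - c * μ' y ∂ν := by
        refine integral_congr_ae ?_
        filter_upwards [hμ, hμ'] with y h h'
        refine mul_div_cancel_of_imp' fun h0 => ?_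
        rw [h0, mul_zero, mul_zero] at h h'
        rw [le_antisymm h.2 h.1, le_antisymm h'.2 h'.1, mul_zero, sub_zero]
    _ = 1 - c := by
        rw [integral_sub hμint (hμ'int.const_mul c), integral_const_mul, hμ1, hμ'1, mul_one]

theorem ae_withDensity_sub_mul_div_mem_Icc (hω : AEMeasurable ω ν) (hc : 0 ≤ c) :
    ∀ᵐ y ∂ν.withDensity (fun y => ENNReal.ofReal (ω y)),
      (μ y - c * μ' y) / ω y ∈ Set.Icc (γ - c * (K * γ)) (K * γ - c * γ) := by
  rw [ae_withDensity_iff' hω.ennreal_ofReal]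
  filter_upwards [hμ, hμ'] with y ⟨hlb, hub⟩ ⟨hlb', hub'⟩ hy
  exact sub_mul_div_mem_Icc_of_sandwich hc (ENNReal.ofReal_pos.1 (pos_iff_ne_zero.2 hy))
    hlb hub hlb' hub'

theorem integral_withDensity_sq_sub_mul_div_le (hω : AEMeasurable ω ν)
    (hω_nonneg : 0 ≤ᵐ[ν] ω) (hγ : 0 ≤ γ) (hc : 0 ≤ c)
    (hμ1 : ∫ y, μ y ∂ν = 1) (hμ'1 : ∫ y, μ' y ∂ν = 1) :
    ∫ y, ((μ y - c * μ' y) / ω y) ^ 2 ∂ν.withDensity (fun y => ENNReal.ofReal (ω y))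
      ≤ K * γ + (c ^ 2 * K * γ - 2 * c * γ) := by
  have hμint : Integrable μ ν := .of_integral_ne_zero (hμ1 ▸ one_ne_zero)
  have hμ'int : Integrable μ' ν := .of_integral_ne_zero (hμ'1 ▸ one_ne_zero)
  rw [integral_withDensity_ofReal hω hω_nonneg]
  calc ∫ y, ω y * ((μ y - c * μ' y) / ω y) ^ 2 ∂ν
      ≤ ∫ y, K * γ * μ y + (c ^ 2 * K * γ - 2 * c * γ) * μ' y ∂ν := by
        refine integral_mono_of_nonneg ?_ ((hμint.const_mul _).add (hμ'int.const_mul _)) ?_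
        · filter_upwards [hω_nonneg] with y hy
          exact mul_nonneg hy (sq_nonneg _)
        · filter_upwards [hω_nonneg, hμ, hμ'] with y hy ⟨hlb, hub⟩ ⟨hlb', hub'⟩
          exact mul_sq_sub_mul_div_le_of_sandwich hγ hc hy hlb hub hlb' hub'
    _ = K * γ + (c ^ 2 * K * γ - 2 * c * γ) := by
        rw [integral_add (hμint.const_mul _) (hμ'int.const_mul _), integral_const_mul,
          integral_const_mul, hμ1, hμ'1, mul_one, mul_one]

end Amplification

section ExpBounds

variable {γ ε₀ ε : ℝ}

lemma mul_exp_neg_mul_one_sub_exp_add_le (hγ : 0 ≤ γ) (hε₀ : 0 ≤ ε₀) :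
    γ * exp (-ε₀) * (1 - exp (ε + 2 * ε₀)) ≤ γ - exp ε * (exp ε₀ * γ) := by
  have hexp : exp (-ε₀) * exp (ε + 2 * ε₀) = exp ε * exp ε₀ := by
    rw [← exp_add, ← exp_add]; ring_nf
  have h := mul_le_mul_of_nonneg_left (exp_le_one_iff.2 (neg_nonpos.2 hε₀)) hγ
  linear_combination h - γ * hexp

lemma sub_le_mul_exp_mul_one_sub_exp_sub (hγ : 0 ≤ γ) (hε₀ : 0 ≤ ε₀) :
    exp ε₀ * γ - exp ε * γ ≤ γ * exp ε₀ * (1 - exp (ε - 2 * ε₀)) := by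
  have hexp : exp ε₀ * exp (ε - 2 * ε₀) = exp (ε - ε₀) := by
    rw [← exp_add]; ring_nf
  have h := mul_le_mul_of_nonneg_left (exp_le_exp.2 (by linarith : ε - ε₀ ≤ ε)) hγ
  linear_combination h + γ * hexp

lemma add_sq_sub_le_mul_exp_sub (hγ : γ ∈ Set.Icc (0 : ℝ) 1) (hε₀ : 0 ≤ ε₀) :
    exp ε₀ * γ + (exp ε ^ 2 * exp ε₀ * γ - 2 * exp ε * γ)
      ≤ γ * exp ε₀ * (exp (2 * ε) + 1) - 2 * γ ^ 2 * exp (ε - 2 * ε₀) := by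
  have hexp : exp (2 * ε) = exp ε ^ 2 := by rw [two_mul, exp_add, sq]
  have hγ_sq : γ ^ 2 ≤ γ := by nlinarith [hγ.1, hγ.2]
  have h := mul_le_mul hγ_sq (exp_le_exp.2 (by linarith : ε - 2 * ε₀ ≤ ε)) (exp_pos _).le hγ.1
  linear_combination 2 * h - γ * exp ε₀ * hexp

end ExpBounds

theorem stmt13_general {Y : Type*} [MeasurableSpace Y] (ν : Measure Y)
    (γ ε₀ ε : ℝ) (hγ : γ ∈ Set.Ioc (0:ℝ) 1) (hε₀ : 0 ≤ ε₀)
    (μ μ' ω : Y → ℝ)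
    (hωmeas : Measurable ω)
    (hωnn : ∀ y, 0 ≤ ω y)
    (hμ1 : ∫ y, μ y ∂ν = 1) (hμ'1 : ∫ y, μ' y ∂ν = 1)
    (hμlb : ∀ᵐ y ∂ν, γ * ω y ≤ μ y)
    (hμub : ∀ᵐ y ∂ν, μ y ≤ Real.exp ε₀ * (γ * ω y))
    (hμ'lb : ∀ᵐ y ∂ν, γ * ω y ≤ μ' y)
    (hμ'ub : ∀ᵐ y ∂ν, μ' y ≤ Real.exp ε₀ * (γ * ω y))
    (L : Y → ℝ) (hL : ∀ y, L y = (μ y - Real.exp ε * μ' y) / ω y) :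
    (∫ y, L y ∂(ν.withDensity fun y => ENNReal.ofReal (ω y)) = 1 - Real.exp ε) ∧
    (∀ᵐ y ∂(ν.withDensity fun y => ENNReal.ofReal (ω y)),
      γ * Real.exp (-ε₀) * (1 - Real.exp (ε + 2 * ε₀)) ≤ L y ∧
        L y ≤ γ * Real.exp ε₀ * (1 - Real.exp (ε - 2 * ε₀))) ∧
    (∫ y, (L y) ^ 2 ∂(ν.withDensity fun y => ENNReal.ofReal (ω y))
      ≤ γ * Real.exp ε₀ * (Real.exp (2 * ε) + 1) - 2 * γ ^ 2 * Real.exp (ε - 2 * ε₀)) := by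
  obtain rfl : L = fun y => (μ y - exp ε * μ' y) / ω y := funext hL
  have hγ₀ : 0 ≤ γ := hγ.1.le
  have hω : AEMeasurable ω ν := hωmeas.aemeasurable
  have hω_nonneg : 0 ≤ᵐ[ν] ω := .of_forall hωnn
  have hμ := hμlb.and hμub
  have hμ' := hμ'lb.and hμ'ub
  refine ⟨integral_withDensity_sub_mul_div hμ hμ' hω hω_nonneg hμ1 hμ'1, ?_, ?_⟩
  · filter_upwards [ae_withDensity_sub_mul_div_mem_Icc hμ hμ' hω (exp_pos ε).le] with y hy
    exact ⟨(mul_exp_neg_mul_one_sub_exp_add_le hγ₀ hε₀).trans hy.1,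
      hy.2.trans (sub_le_mul_exp_mul_one_sub_exp_sub hγ₀ hε₀)⟩
  · exact (integral_withDensity_sq_sub_mul_div_le hμ hμ' hω hω_nonneg hγ₀ (exp_pos ε).le hμ1
      hμ'1).trans (add_sq_sub_le_mul_exp_sub ⟨hγ₀, hγ.2⟩ hε₀)

/-- properties of the privacy amplification random variable.
If `μ, μ', ω` are probability densities w.r.t. a σ-finite `ν` with
`γ·ω ≤ μ ≤ e^{ε₀}·γ·ω` and `γ·ω ≤ μ' ≤ e^{ε₀}·γ·ω` a.e. (as for the blanket `ω` and
total variation similarity `γ` of an `ε₀`-LDP local randomizer), `W ~ ω` and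
`L = (μ(W) − e^ε·μ'(W))/ω(W)`, then (1) `E[L] = 1 − e^ε`;
(2) `γe^{−ε₀}(1 − e^{ε+2ε₀}) ≤ L ≤ γe^{ε₀}(1 − e^{ε−2ε₀})` a.s.;
(3) `E[L²] ≤ γe^{ε₀}(e^{2ε} + 1) − 2γ²e^{ε−2ε₀}`. -/
theorem stmt13 {Y : Type*} [MeasurableSpace Y] (ν : Measure Y) [SigmaFinite ν]
    (γ ε₀ ε : ℝ) (hγ : γ ∈ Set.Ioc (0:ℝ) 1) (hε₀ : 0 ≤ ε₀) (hε : 0 ≤ ε)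
    (μ μ' ω : Y → ℝ)
    (hμmeas : Measurable μ) (hμ'meas : Measurable μ') (hωmeas : Measurable ω)
    (hμnn : ∀ y, 0 ≤ μ y) (hμ'nn : ∀ y, 0 ≤ μ' y) (hωnn : ∀ y, 0 ≤ ω y)
    (hμ1 : ∫ y, μ y ∂ν = 1) (hμ'1 : ∫ y, μ' y ∂ν = 1) (hω1 : ∫ y, ω y ∂ν = 1)
    (hμlb : ∀ᵐ y ∂ν, γ * ω y ≤ μ y)
    (hμub : ∀ᵐ y ∂ν, μ y ≤ Real.exp ε₀ * (γ * ω y))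
    (hμ'lb : ∀ᵐ y ∂ν, γ * ω y ≤ μ' y)
    (hμ'ub : ∀ᵐ y ∂ν, μ' y ≤ Real.exp ε₀ * (γ * ω y))
    (L : Y → ℝ) (hL : ∀ y, L y = (μ y - Real.exp ε * μ' y) / ω y) :
    (∫ y, L y ∂(ν.withDensity fun y => ENNReal.ofReal (ω y)) = 1 - Real.exp ε) ∧
    (∀ᵐ y ∂(ν.withDensity fun y => ENNReal.ofReal (ω y)),
      γ * Real.exp (-ε₀) * (1 - Real.exp (ε + 2 * ε₀)) ≤ L y ∧
        L y ≤ γ * Real.exp ε₀ * (1 - Real.exp (ε - 2 * ε₀))) ∧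
    (∫ y, (L y) ^ 2 ∂(ν.withDensity fun y => ENNReal.ofReal (ω y))
      ≤ γ * Real.exp ε₀ * (Real.exp (2 * ε) + 1) - 2 * γ ^ 2 * Real.exp (ε - 2 * ε₀)) :=
  stmt13_general ν γ ε₀ ε hγ hε₀ μ μ' ω hωmeas hωnn hμ1 hμ'1 hμlb hμub hμ'lb hμ'ub L hL
end

section
/- Let m ≥ 1 and let L_1, …, L_m be i.i.d. real random variables with b₋ ≤ L_i ≤ b₊ almost surely and E[L_i] = −a with a > 0, and set b = b₊ − b₋ > 0. Then E[max(Σ_{i=1}^m L_i, 0)] ≤ (b²/(4a))·e^{−2ma²/b²}. -/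
/-!
Centring the summands, Hoeffding's lemma makes `S + m a` (with `S = ∑ L_i`) sub-Gaussian with
variance proxy `c = m b² / 4`. From `1 + t x ≤ e^{t x}` we get `max (x, 0) ≤ e^{t x} / t` for
`t > 0`, hence `E[max (S, 0)] ≤ e^{-t m a} E[e^{t (S + m a)}] / t ≤ e^{-t m a + c t² / 2} / t`,
and the choice `t = m a / c = 4 a / b²` gives the bound.
-/

open MeasureTheory ProbabilityTheory Real
open scoped NNReal

lemma max_zero_le_exp_mul_div {t : ℝ} (ht : 0 < t) (x : ℝ) : max x 0 ≤ exp (t * x) / t := by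
  rw [le_div_iff₀ ht, max_mul_of_nonneg _ _ ht.le, zero_mul]
  refine max_le ?_ (exp_pos _).le
  linarith [add_one_le_exp (t * x)]

namespace ProbabilityTheory

variable {Ω : Type*} [MeasurableSpace Ω] {μ : Measure Ω}

lemma HasSubgaussianMGF.integral_max_sub_zero_le {X : Ω → ℝ} {c : ℝ≥0}
    (h : HasSubgaussianMGF X c μ) (hc : 0 < c) {A : ℝ} (hA : 0 < A) :
    ∫ ω, max (X ω - A) 0 ∂μ ≤ c / A * exp (-(A ^ 2 / (2 * c))) := by
  set t : ℝ := A / c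
  have ht : 0 < t := by positivity
  calc ∫ ω, max (X ω - A) 0 ∂μ
      ≤ ∫ ω, exp (t * X ω) * (exp (-(t * A)) / t) ∂μ := by
        refine integral_mono_of_nonneg (ae_of_all _ fun ω ↦ le_max_right _ _)
          ((h.integrable_exp_mul t).mul_const _) (ae_of_all _ fun ω ↦ ?_)
        calc max (X ω - A) 0 ≤ exp (t * (X ω - A)) / t := max_zero_le_exp_mul_div ht _
          _ = exp (t * X ω) * (exp (-(t * A)) / t) := by
            rw [mul_sub, sub_eq_add_neg, exp_add, mul_div_assoc]
    _ = mgf X μ t * (exp (-(t * A)) / t) := integral_mul_const _ _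
    _ ≤ exp (c * t ^ 2 / 2) * (exp (-(t * A)) / t) := by gcongr; exact h.mgf_le t
    _ = c / A * exp (-(A ^ 2 / (2 * c))) := by
      rw [mul_div_assoc', ← exp_add]
      unfold t
      field_simp
      ring_nf

lemma hasSubgaussianMGF_sum_sub_integral_of_mem_Icc {ι : Type*} [IsProbabilityMeasure μ]
    {X : ι → Ω → ℝ} (hX : ∀ i, AEMeasurable (X i) μ) (hindep : iIndepFun X μ) {lo hi : ℝ}
    (hbd : ∀ i, ∀ᵐ ω ∂μ, X i ω ∈ Set.Icc lo hi) (s : Finset ι) :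
    HasSubgaussianMGF (fun ω ↦ ∑ i ∈ s, (X i ω - μ[X i])) (s.card * (‖hi - lo‖₊ / 2) ^ 2) μ := by
  have hcentred : iIndepFun (fun i ↦ (fun x ↦ x - μ[X i]) ∘ X i) μ :=
    hindep.comp _ fun i ↦ measurable_id.sub_const _
  simpa using HasSubgaussianMGF.sum_of_iIndepFun hcentred
    (c := fun _ ↦ (‖hi - lo‖₊ / 2) ^ 2) fun i _ ↦ hasSubgaussianMGF_of_mem_Icc (hX i) (hbd i)

end ProbabilityTheory

theorem stmt14_general {Ω : Type*} [MeasurableSpace Ω] (μ : Measure Ω) [IsProbabilityMeasure μ]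
    (m : ℕ) (hm : 1 ≤ m) (L : Fin m → Ω → ℝ)
    (hmeas : ∀ i, Measurable (L i))
    (hindep : iIndepFun L μ)
    (a bLo bHi : ℝ) (ha : 0 < a) (hb : 0 < bHi - bLo)
    (hbound : ∀ i, ∀ᵐ ω ∂μ, L i ω ∈ Set.Icc bLo bHi)
    (hmean : ∀ i, ∫ ω, L i ω ∂μ = -a) :
    ∫ ω, max (∑ i, L i ω) 0 ∂μ
      ≤ (bHi - bLo) ^ 2 / (4 * a) * Real.exp (-(2 * m * a ^ 2 / (bHi - bLo) ^ 2)) := by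
  have hsum := hasSubgaussianMGF_sum_sub_integral_of_mem_Icc (fun i ↦ (hmeas i).aemeasurable)
    hindep hbound Finset.univ
  simp only [hmean, sub_neg_eq_add, Finset.sum_add_distrib, Finset.sum_const, Finset.card_univ,
    Fintype.card_fin, nsmul_eq_mul] at hsum
  have hc : 0 < (m * (‖bHi - bLo‖₊ / 2) ^ 2 : ℝ≥0) := by
    have : 0 < ‖bHi - bLo‖₊ := by simpa using hb.ne'
    have : 0 < m := hm
    positivity
  have hbound_sum := hsum.integral_max_sub_zero_le hc (A := m * a) (by positivity)
  have hproxy : ((m * (‖bHi - bLo‖₊ / 2) ^ 2 : ℝ≥0) : ℝ) = m * (bHi - bLo) ^ 2 / 4 := by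
    push_cast
    rw [Real.norm_eq_abs, abs_of_pos hb]
    ring
  have hm' : (0 : ℝ) < m := by exact_mod_cast hm
  rw [hproxy] at hbound_sum
  convert hbound_sum using 2
  · simp
  · field_simp
  · congr 1
    field_simp
    ring

/-- Hoeffding bound on the expected positive part.
If `L_1,…,L_m` are i.i.d. with `bLo ≤ L_i ≤ bHi` a.s., `E[L_i] = −a < 0`, and
`b = bHi − bLo > 0`, then `E[max(Σ L_i, 0)] ≤ (b²/(4a))·e^{−2ma²/b²}`. -/
theorem stmt14 {Ω : Type*} [MeasurableSpace Ω] (μ : Measure Ω) [IsProbabilityMeasure μ]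
    (m : ℕ) (hm : 1 ≤ m) (L : Fin m → Ω → ℝ)
    (hmeas : ∀ i, Measurable (L i))
    (hindep : iIndepFun L μ)
    (hident : ∀ i j, IdentDistrib (L i) (L j) μ μ)
    (a bLo bHi : ℝ) (ha : 0 < a) (hb : 0 < bHi - bLo)
    (hbound : ∀ i, ∀ᵐ ω ∂μ, L i ω ∈ Set.Icc bLo bHi)
    (hmean : ∀ i, ∫ ω, L i ω ∂μ = -a) :
    ∫ ω, max (∑ i, L i ω) 0 ∂μ
      ≤ (bHi - bLo) ^ 2 / (4 * a) * Real.exp (-(2 * m * a ^ 2 / (bHi - bLo) ^ 2)) :=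
  stmt14_general μ m hm L hmeas hindep a bLo bHi ha hb hbound hmean
end

section
/- Let k ≥ 2, ε₀ ≥ 0, ε ≥ 0, and let R be the ε₀-LDP k-ary randomized response on [k] with output probability mass functions μ_x(y) = e^{ε₀}/(e^{ε₀}+k−1) if y = x and 1/(e^{ε₀}+k−1) otherwise; its total variation similarity is γ = k/(e^{ε₀}+k−1) and its blanket distribution ω is uniform on [k]. Fix x, x' ∈ [k] with x ≠ x', let W be uniform on [k], and let L = (μ_x(W) − e^ε·μ_{x'}(W))/ω(W) = k·(μ_x(W) − e^ε·μ_{x'}(W)). Then: (1) −(1−γ)·k·e^ε ≤ L − γ·(1 − e^ε) ≤ (1−γ)·k almost surely; (2) E[L²] = γ·(2−γ)·(1−e^ε)² + (1−γ)²·k·(1 + e^{2ε}). -/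
/-- privacy amplification random variable of `k`-ary randomized
response.  For the `ε₀`-LDP `k`-ary randomized response with pmfs `μ_x`, total variation
similarity `γ = k/(e^{ε₀}+k−1)` and uniform blanket `ω`, inputs `x ≠ x'`, `W` uniform on
`[k]` and `L = k·(μ_x(W) − e^ε·μ_{x'}(W))`:
(1) `−(1−γ)·k·e^ε ≤ L − γ·(1 − e^ε) ≤ (1−γ)·k`;
(2) `E[L²] = γ·(2−γ)·(1−e^ε)² + (1−γ)²·k·(1 + e^{2ε})`. -/
theorem stmt17 (k : ℕ) (hk : 2 ≤ k) (ε₀ ε : ℝ) (hε₀ : 0 ≤ ε₀) (hε : 0 ≤ ε)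
    (μ : Fin k → Fin k → ℝ)
    (hμ : ∀ x y : Fin k, μ x y =
      if y = x then Real.exp ε₀ / (Real.exp ε₀ + k - 1)
      else 1 / (Real.exp ε₀ + k - 1))
    (γ : ℝ) (hγ : γ = k / (Real.exp ε₀ + k - 1))
    (x x' : Fin k) (hxx' : x ≠ x')
    (L : Fin k → ℝ) (hL : ∀ w, L w = k * (μ x w - Real.exp ε * μ x' w)) :
    (∀ w : Fin k, -((1 - γ) * k * Real.exp ε) ≤ L w - γ * (1 - Real.exp ε) ∧
        L w - γ * (1 - Real.exp ε) ≤ (1 - γ) * k) ∧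
    (1 / (k : ℝ)) * ∑ w : Fin k, (L w) ^ 2
      = γ * (2 - γ) * (1 - Real.exp ε) ^ 2
        + (1 - γ) ^ 2 * k * (1 + Real.exp (2 * ε)) := by
  have hk2 : (2 : ℝ) ≤ (k : ℝ) := by exact_mod_cast hk
  have hE0 : 1 ≤ Real.exp ε₀ := Real.one_le_exp hε₀
  have hE : 1 ≤ Real.exp ε := Real.one_le_exp hε
  have hD : (0 : ℝ) < Real.exp ε₀ + k - 1 := by nlinarith
  have hDne : (Real.exp ε₀ + k - 1) ≠ 0 := ne_of_gt hD
  have hγ1 : γ ≤ 1 := by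
    rw [hγ, div_le_one hD]; nlinarith
  have hkpos : (0 : ℝ) < (k : ℝ) := by linarith
  have hLx : L x = k * (1 - γ) + γ * (1 - Real.exp ε) := by
    rw [hL x, hμ x x, hμ x' x, if_pos rfl, if_neg hxx', hγ]
    field_simp
    ring
  have hLx' : L x' = γ * (1 - Real.exp ε) - k * (1 - γ) * Real.exp ε := by
    rw [hL x', hμ x x', hμ x' x', if_pos rfl, if_neg (Ne.symm hxx'), hγ]
    field_simp
    ring
  have hLo : ∀ w : Fin k, w ≠ x → w ≠ x' → L w = γ * (1 - Real.exp ε) := by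
    intro w h1 h2
    rw [hL w, hμ x w, hμ x' w, if_neg h1, if_neg h2, hγ]
    field_simp
    all_goals ring
  constructor
  · intro w
    by_cases h1 : w = x
    · subst h1; rw [hLx]
      constructor <;>
        nlinarith [mul_nonneg (mul_nonneg (sub_nonneg.2 hγ1) hkpos.le) (Real.exp_pos ε).le,
          mul_nonneg (sub_nonneg.2 hγ1) hkpos.le]
    by_cases h2 : w = x'
    · subst h2; rw [hLx']
      constructor <;>
        nlinarith [mul_nonneg (mul_nonneg (sub_nonneg.2 hγ1) hkpos.le) (Real.exp_pos ε).le,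
          mul_nonneg (sub_nonneg.2 hγ1) hkpos.le]
    · rw [hLo w h1 h2]
      constructor <;>
        nlinarith [mul_nonneg (mul_nonneg (sub_nonneg.2 hγ1) hkpos.le) (Real.exp_pos ε).le,
          mul_nonneg (sub_nonneg.2 hγ1) hkpos.le]
  · have hsum : ∑ w : Fin k, (L w) ^ 2
        = ((k * (1 - γ) + γ * (1 - Real.exp ε)) ^ 2 - (γ * (1 - Real.exp ε)) ^ 2)
          + ((γ * (1 - Real.exp ε) - k * (1 - γ) * Real.exp ε) ^ 2
              - (γ * (1 - Real.exp ε)) ^ 2)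
          + (k : ℝ) * (γ * (1 - Real.exp ε)) ^ 2 := by
      have hpt : ∀ w : Fin k, (L w) ^ 2
          = (if w = x then (k * (1 - γ) + γ * (1 - Real.exp ε)) ^ 2
                - (γ * (1 - Real.exp ε)) ^ 2 else 0)
            + (if w = x' then (γ * (1 - Real.exp ε) - k * (1 - γ) * Real.exp ε) ^ 2
                - (γ * (1 - Real.exp ε)) ^ 2 else 0)
            + (γ * (1 - Real.exp ε)) ^ 2 := by
        intro w
        by_cases h1 : w = x
        · subst h1
          rw [if_pos rfl, if_neg hxx', hLx]; ring
        by_cases h2 : w = x'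
        · subst h2
          rw [if_neg (Ne.symm hxx') , if_pos rfl, hLx']; ring
        · rw [if_neg h1, if_neg h2, hLo w h1 h2]; ring
      rw [Finset.sum_congr rfl (fun w _ => hpt w)]
      rw [Finset.sum_add_distrib, Finset.sum_add_distrib,
        Finset.sum_ite_eq' Finset.univ x, Finset.sum_ite_eq' Finset.univ x',
        if_pos (Finset.mem_univ x), if_pos (Finset.mem_univ x'),
        Finset.sum_const, Finset.card_univ, Fintype.card_fin, nsmul_eq_mul]
    rw [hsum, two_mul, Real.exp_add]
    field_simp
    ring
end

section
/- Let ε₀ > 0, ε ≥ 0, and let R be the ε₀-LDP Laplace mechanism on [0,1], R(x) = x + Lap(1/ε₀), with output densities μ_x(y) = (ε₀/2)·e^{−ε₀|y−x|} on ℝ; its blanket distribution has density ω(y) = (ε₀/2)·e^{−ε₀|y−1/2|}. Fix x, x' ∈ [0,1], let W have density ω, and let L = (μ_x(W) − e^ε·μ_{x'}(W))/ω(W). Then: (1) e^{−ε₀/2}·(1 − e^{ε+ε₀}) ≤ L ≤ e^{ε₀/2}·(1 − e^{ε−ε₀}) almost surely; (2) E[L²] ≤ ((e^{2ε} + 1)/3)·(2·e^{ε₀/2}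 + e^{−ε₀}) − 2·e^ε·(2·e^{−ε₀/2} − e^{−ε₀}). -/
/-!
Write `g_t(y) = μ_t(y) / ω(y) = exp (ε₀ (|y - 1/2| - |y - t|))`, so that `L = g_x - e^ε g_{x'}`.
By the triangle inequality `e^{-ε₀/2} ≤ g_t ≤ e^{ε₀/2}` for `t ∈ [0,1]`, which gives (1).
For (2), `E[L²] = ∫ μ_x²/ω + e^{2ε} ∫ μ_{x'}²/ω - 2 e^ε ∫ μ_x μ_{x'}/ω`, and all three integrands
are piecewise exponential with kinks at `1/2`, `x`, `x'`. The diagonal integral equals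
`(2z + z⁻²)/3` with `z = e^{ε₀ |t - 1/2|} ∈ [1, e^{ε₀/2}]`, which increases in `z`. The cross
integral is at least `2e^{-ε₀/2} - e^{-ε₀}`: after the reflection `y ↦ 1 - y`, either both points
lie to the right of `1/2`, where the integral is already at least `1`, or they straddle `1/2`,
where the integrand dominates a signed combination of three Laplace densities.
-/

open MeasureTheory Set Real

section ExpIntegrals

variable {a : ℝ}

lemma integrableOn_exp_mul_add_Iic (ha : 0 < a) (k c : ℝ) :
    IntegrableOn (fun y => exp (a * y + k)) (Iic c) := by
  simp only [exp_add]
  exact (integrableOn_exp_mul_Iic ha c).mul_const (exp k)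

lemma integral_exp_mul_add_Iic (ha : 0 < a) (k c : ℝ) :
    ∫ y in Iic c, exp (a * y + k) = exp (a * c + k) / a := by
  simp only [exp_add, integral_mul_const, integral_exp_mul_Iic ha]
  ring

lemma integrableOn_exp_mul_add_Ioi (ha : a < 0) (k c : ℝ) :
    IntegrableOn (fun y => exp (a * y + k)) (Ioi c) := by
  simp only [exp_add]
  exact (integrableOn_exp_mul_Ioi ha c).mul_const (exp k)

lemma integral_exp_mul_add_Ioi (ha : a < 0) (k c : ℝ) :
    ∫ y in Ioi c, exp (a * y + k) = -exp (a * c + k) / a := by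
  simp only [exp_add, integral_mul_const, integral_exp_mul_Ioi ha]
  ring

lemma integral_exp_mul_add (ha : a ≠ 0) (k c d : ℝ) :
    ∫ y in c..d, exp (a * y + k) = (exp (a * d + k) - exp (a * c + k)) / a := by
  have hderiv : ∀ y, HasDerivAt (fun y => exp (a * y + k) / a) (exp (a * y + k)) y := fun y => by
    simpa [mul_div_cancel_right₀ _ ha] using
      ((((hasDerivAt_id y).const_mul a).add_const k).exp).div_const a
  rw [intervalIntegral.integral_eq_sub_of_hasDerivAt (fun y _ => hderiv y)
    ((by fun_prop : Continuous fun y => exp (a * y + k)).intervalIntegrable c d), sub_div]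

end ExpIntegrals

section LaplaceIntegral

variable {s : ℝ}

lemma integrableOn_exp_sub_mul_abs_Iic (hs : 0 < s) (k t : ℝ) :
    IntegrableOn (fun y => exp (k - s * |y - t|)) (Iic t) :=
  (integrableOn_exp_mul_add_Iic hs (k - s * t) t).congr_fun
    (fun y (hy : y ≤ t) => by rw [abs_of_nonpos (by linarith)]; ring_nf) measurableSet_Iic

lemma integrableOn_exp_sub_mul_abs_Ioi (hs : 0 < s) (k t : ℝ) :
    IntegrableOn (fun y => exp (k - s * |y - t|)) (Ioi t) :=
  (integrableOn_exp_mul_add_Ioi (neg_neg_of_pos hs) (k + s * t) t).congr_fun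
    (fun y (hy : t < y) => by rw [abs_of_pos (by linarith)]; ring_nf) measurableSet_Ioi

lemma integrable_exp_sub_mul_abs (hs : 0 < s) (k t : ℝ) :
    Integrable fun y => exp (k - s * |y - t|) := by
  rw [← integrableOn_univ, ← Iic_union_Ioi (a := t), integrableOn_union]
  exact ⟨integrableOn_exp_sub_mul_abs_Iic hs k t, integrableOn_exp_sub_mul_abs_Ioi hs k t⟩

lemma integral_exp_sub_mul_abs (hs : 0 < s) (k t : ℝ) :
    ∫ y, exp (k - s * |y - t|) = 2 * exp k / s := by
  rw [← intervalIntegral.integral_Iic_add_Ioi (integrableOn_exp_sub_mul_abs_Iic hs k t)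
    (integrableOn_exp_sub_mul_abs_Ioi hs k t),
    setIntegral_congr_fun measurableSet_Iic (g := fun y => exp (s * y + (k - s * t)))
      (fun y (hy : y ≤ t) => by simp only; rw [abs_of_nonpos (by linarith)]; ring_nf),
    setIntegral_congr_fun measurableSet_Ioi (g := fun y => exp (-s * y + (k + s * t)))
      (fun y (hy : t < y) => by simp only; rw [abs_of_pos (by linarith)]; ring_nf),
    integral_exp_mul_add_Iic hs, integral_exp_mul_add_Ioi (neg_neg_of_pos hs)]
  ring_nf

end LaplaceIntegral

lemma abs_sub_sub_abs_sub_le (y a b : ℝ) : |y - a| - |y - b| ≤ |a - b| := by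
  simpa [abs_sub_comm b a] using abs_sub_abs_le_abs_sub (y - a) (y - b)

lemma two_le_exp_add_exp_neg (x : ℝ) : 2 ≤ exp x + exp (-x) := by
  have := one_le_cosh x
  rw [cosh_eq] at this
  linarith

lemma four_mul_exp_add_two_mul_exp_neg_two_mul_le {a b : ℝ} (ha : 0 ≤ a) (hab : a ≤ b) :
    4 * exp a + 2 * exp (-(2 * a)) ≤ 4 * exp b + 2 * exp (-(2 * b)) := by
  have hp : exp (-a) * exp a = 1 := by rw [← exp_add, neg_add_cancel, exp_zero]
  have hq : exp (-b) * exp b = 1 := by rw [← exp_add, neg_add_cancel, exp_zero]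
  have hqp : exp (-b) ≤ exp (-a) := exp_le_exp.2 (by linarith)
  have hp1 : exp (-a) ≤ 1 := exp_le_one_iff.2 (by linarith)
  have hab' : exp a ≤ exp b := exp_le_exp.2 hab
  rw [show -(2 * a) = -a + -a by ring, show -(2 * b) = -b + -b by ring, exp_add, exp_add]
  nlinarith [exp_pos (-a), exp_pos (-b), mul_nonneg (sub_nonneg.2 hqp) (sub_nonneg.2 hab'),
    mul_nonneg (exp_pos (-b)).le (sub_nonneg.2 hp1)]

lemma integral_withDensity_ofReal_s18 {X E : Type*} [MeasurableSpace X] [NormedAddCommGroup E]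
    [NormedSpace ℝ E] {μ : Measure X} {f : X → ℝ} (hf : Measurable f) (hf₀ : ∀ x, 0 ≤ f x)
    (g : X → E) :
    ∫ x, g x ∂μ.withDensity (fun x => ENNReal.ofReal (f x)) = ∫ x, f x • g x ∂μ := by
  rw [integral_withDensity_eq_integral_toReal_smul hf.ennreal_ofReal
    (ae_of_all _ fun _ => ENNReal.ofReal_lt_top)]
  congr 1 with x
  rw [ENNReal.toReal_ofReal (hf₀ x)]

namespace LaplaceBlanket

variable {s : ℝ}

/-- `μ_t / ω`: the Laplace density centred at `t` over the blanket density, both of scale `1/s`. -/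
noncomputable def ratio (s t y : ℝ) : ℝ := exp (s * |y - 1 / 2| - s * |y - t|)

lemma laplace_sub_div_blanket (hs : s ≠ 0) (c u v y : ℝ) :
    (s / 2 * exp (-(s * |y - u|)) - c * (s / 2 * exp (-(s * |y - v|)))) /
      (s / 2 * exp (-(s * |y - 1 / 2|))) = ratio s u y - c * ratio s v y := by
  simp only [ratio, exp_sub, exp_neg]
  field_simp

lemma ratio_mem_Icc (hs : 0 ≤ s) {t : ℝ} (ht : t ∈ Icc (0 : ℝ) 1) (y : ℝ) :
    ratio s t y ∈ Icc (exp (-(s / 2))) (exp (s / 2)) := by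
  have hdist : |1 / 2 - t| ≤ 1 / 2 := abs_le.2 ⟨by linarith [ht.2], by linarith [ht.1]⟩
  have hle := abs_sub_sub_abs_sub_le y (1 / 2) t
  have hge := abs_sub_sub_abs_sub_le y t (1 / 2)
  rw [abs_sub_comm t] at hge
  constructor <;> apply exp_le_exp.2 <;> nlinarith

lemma ratio_sub_exp_mul_ratio_mem_Icc (hs : 0 ≤ s) {u v : ℝ} (hu : u ∈ Icc (0 : ℝ) 1)
    (hv : v ∈ Icc (0 : ℝ) 1) (ε y : ℝ) :
    ratio s u y - exp ε * ratio s v y ∈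
      Icc (exp (-(s / 2)) * (1 - exp (ε + s))) (exp (s / 2) * (1 - exp (ε - s))) := by
  obtain ⟨hu_lo, hu_hi⟩ := ratio_mem_Icc hs hu y
  obtain ⟨hv_lo, hv_hi⟩ := ratio_mem_Icc hs hv y
  have hlo : exp (-(s / 2)) * (1 - exp (ε + s)) = exp (-(s / 2)) - exp ε * exp (s / 2) := by
    rw [mul_sub, mul_one, ← exp_add, ← exp_add]
    ring_nf
  have hhi : exp (s / 2) * (1 - exp (ε - s)) = exp (s / 2) - exp ε * exp (-(s / 2)) := by
    rw [mul_sub, mul_one, ← exp_add, ← exp_add]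
    ring_nf
  rw [hlo, hhi]
  exact ⟨sub_le_sub hu_lo (mul_le_mul_of_nonneg_left hv_hi (exp_pos ε).le),
    sub_le_sub hu_hi (mul_le_mul_of_nonneg_left hv_lo (exp_pos ε).le)⟩

/-- `(2/s) · μ_u μ_v / ω`. -/
noncomputable def crossKernel (s u v y : ℝ) : ℝ := exp (s * |y - 1 / 2| - s * |y - u| - s * |y - v|)

lemma crossKernel_eq_mul (s u v y : ℝ) :
    crossKernel s u v y = exp (-(s * |y - 1 / 2|)) * ratio s u y * ratio s v y := by
  simp only [crossKernel, ratio, ← exp_add]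
  ring_nf

lemma crossKernel_comm (s u v : ℝ) : crossKernel s u v = crossKernel s v u := by
  ext y
  simp only [crossKernel]
  ring_nf

lemma integral_crossKernel_one_sub (s u v : ℝ) :
    ∫ y, crossKernel s (1 - u) (1 - v) y = ∫ y, crossKernel s u v y := by
  rw [← integral_sub_left_eq_self _ volume 1]
  congr 1 with y
  simp only [crossKernel, show 1 - y - 1 / 2 = -(y - 1 / 2) by ring,
    show 1 - y - (1 - u) = -(y - u) by ring, show 1 - y - (1 - v) = -(y - v) by ring, abs_neg]

lemma integrable_crossKernel (hs : 0 < s) (u v : ℝ) : Integrable (crossKernel s u v) := by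
  refine (integrable_exp_sub_mul_abs hs (s * |1 / 2 - u|) v).mono'
    (by unfold crossKernel; fun_prop) (ae_of_all _ fun y => ?_)
  rw [Real.norm_eq_abs, crossKernel, abs_exp]
  gcongr
  nlinarith [abs_sub_sub_abs_sub_le y (1 / 2) u]

lemma integral_crossKernel_self_of_le_half (hs : 0 < s) {t : ℝ} (ht : t ≤ 1 / 2) :
    ∫ y, crossKernel s t t y =
      (4 * exp (s * (1 / 2 - t)) + 2 * exp (-(2 * (s * (1 / 2 - t))))) / (3 * s) := by
  have hint := integrable_crossKernel hs t t
  rw [← intervalIntegral.integral_Iic_add_Ioi hint.integrableOn hint.integrableOn,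
    ← intervalIntegral.integral_interval_add_Ioi (b := 1 / 2) hint.integrableOn hint.integrableOn,
    setIntegral_congr_fun measurableSet_Iic (g := fun y => exp (s * y + (s / 2 - 2 * s * t)))
      (fun y (hy : y ≤ t) => by
        simp only [crossKernel]
        rw [abs_of_nonpos (by linarith : y - 1 / 2 ≤ 0), abs_of_nonpos (by linarith : y - t ≤ 0)]
        ring_nf),
    intervalIntegral.integral_congr (g := fun y => exp (-(3 * s) * y + (s / 2 + 2 * s * t)))
      (fun y hy => by
        rw [uIcc_of_le ht] at hy
        simp only [crossKernel]
        rw [abs_of_nonpos (by linarith [hy.2] : y - 1 / 2 ≤ 0),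
          abs_of_nonneg (by linarith [hy.1] : 0 ≤ y - t)]
        ring_nf),
    setIntegral_congr_fun measurableSet_Ioi (g := fun y => exp (-s * y + (2 * s * t - s / 2)))
      (fun y (hy : 1 / 2 < y) => by
        simp only [crossKernel]
        rw [abs_of_pos (by linarith : 0 < y - 1 / 2), abs_of_pos (by linarith : 0 < y - t)]
        ring_nf),
    integral_exp_mul_add_Iic hs, integral_exp_mul_add (by linarith),
    integral_exp_mul_add_Ioi (by linarith)]
  field_simp
  ring_nf

lemma integral_crossKernel_self (hs : 0 < s) (t : ℝ) :
    ∫ y, crossKernel s t t y =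
      (4 * exp (s * |t - 1 / 2|) + 2 * exp (-(2 * (s * |t - 1 / 2|)))) / (3 * s) := by
  rcases le_total t (1 / 2) with ht | ht
  · rw [abs_of_nonpos (by linarith), neg_sub, integral_crossKernel_self_of_le_half hs ht]
  · rw [← integral_crossKernel_one_sub, integral_crossKernel_self_of_le_half hs (by linarith),
      abs_of_nonneg (by linarith)]
    ring_nf

lemma integral_crossKernel_self_le (hs : 0 < s) {t : ℝ} (ht : t ∈ Icc (0 : ℝ) 1) :
    ∫ y, crossKernel s t t y ≤ (4 * exp (s / 2) + 2 * exp (-s)) / (3 * s) := by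
  have hdist : |t - 1 / 2| ≤ 1 / 2 := abs_le.2 ⟨by linarith [ht.1], by linarith [ht.2]⟩
  have hmono := four_mul_exp_add_two_mul_exp_neg_two_mul_le (b := s / 2)
    (by positivity : 0 ≤ s * |t - 1 / 2|) (by nlinarith)
  rw [show -(2 * (s / 2)) = -s by ring] at hmono
  rw [integral_crossKernel_self hs]
  gcongr

lemma two_div_le_integral_crossKernel (hs : 0 < s) {u v : ℝ} (hu : 1 / 2 ≤ u) (huv : u ≤ v) :
    2 / s ≤ ∫ y, crossKernel s u v y := by
  have hint := integrable_crossKernel hs u v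
  have hright : ∫ y in Ioi v, crossKernel s u v y = exp (s * (u - 1 / 2)) / s := by
    rw [setIntegral_congr_fun measurableSet_Ioi (g := fun y => exp (-s * y + s * (u + v - 1 / 2)))
        (fun y (hy : v < y) => by
          simp only [crossKernel]
          rw [abs_of_pos (by linarith : 0 < y - 1 / 2), abs_of_pos (by linarith : 0 < y - u),
            abs_of_pos (by linarith : 0 < y - v)]
          ring_nf),
      integral_exp_mul_add_Ioi (by linarith)]
    field_simp
    congr 1
    ring
  have hleft : exp (-(s * (u - 1 / 2))) / s ≤ ∫ y in Iic v, crossKernel s u v y := by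
    have hmono := setIntegral_mono_on (integrableOn_exp_mul_add_Iic hs (s * (1 / 2 - u - v)) v)
      hint.integrableOn measurableSet_Iic (fun y (hy : y ≤ v) => by
        simp only [crossKernel]
        rw [abs_of_nonpos (by linarith : y - v ≤ 0)]
        gcongr
        nlinarith [abs_sub_sub_abs_sub_le y u (1 / 2), abs_of_nonneg (by linarith : 0 ≤ u - 1 / 2)])
    rwa [integral_exp_mul_add_Iic hs, show s * v + s * (1 / 2 - u - v) = -(s * (u - 1 / 2)) by ring]
      at hmono
  rw [← intervalIntegral.integral_Iic_add_Ioi hint.integrableOn hint.integrableOn, hright]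
  calc 2 / s ≤ (exp (-(s * (u - 1 / 2))) + exp (s * (u - 1 / 2))) / s := by
        gcongr
        linarith [two_le_exp_add_exp_neg (s * (u - 1 / 2))]
    _ ≤ _ := by rw [add_div]; linarith

/-- Each of the first two terms is below the kernel by the triangle inequality, and on either side
of `1/2` one of them coincides with the third. -/
lemma laplace_combination_le_crossKernel (hs : 0 ≤ s) {u v : ℝ} (hu : u ≤ 1 / 2)
    (hv : 1 / 2 ≤ v) (y : ℝ) :
    exp (-(s * (1 / 2 - u)) - s * |y - v|) + exp (-(s * (v - 1 / 2)) - s * |y - u|)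
      - exp (-(s * (1 / 2 - u)) - s * (v - 1 / 2) - s * |y - 1 / 2|) ≤ crossKernel s u v y := by
  have hv_le : exp (-(s * (1 / 2 - u)) - s * |y - v|) ≤ crossKernel s u v y := by
    refine exp_le_exp.2 ?_
    nlinarith [abs_sub_sub_abs_sub_le y u (1 / 2), abs_of_nonpos (by linarith : u - 1 / 2 ≤ 0)]
  have hu_le : exp (-(s * (v - 1 / 2)) - s * |y - u|) ≤ crossKernel s u v y := by
    refine exp_le_exp.2 ?_
    nlinarith [abs_sub_sub_abs_sub_le y v (1 / 2), abs_of_nonneg (by linarith : 0 ≤ v - 1 / 2)]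
  rcases le_total y (1 / 2) with hy | hy
  · have hv_eq : exp (-(s * (1 / 2 - u)) - s * |y - v|)
        = exp (-(s * (1 / 2 - u)) - s * (v - 1 / 2) - s * |y - 1 / 2|) := by
      rw [abs_of_nonpos (by linarith : y - v ≤ 0), abs_of_nonpos (by linarith : y - 1 / 2 ≤ 0)]
      ring_nf
    linarith
  · have hu_eq : exp (-(s * (v - 1 / 2)) - s * |y - u|)
        = exp (-(s * (1 / 2 - u)) - s * (v - 1 / 2) - s * |y - 1 / 2|) := by
      rw [abs_of_nonneg (by linarith : 0 ≤ y - u), abs_of_nonneg (by linarith : 0 ≤ y - 1 / 2)]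
      ring_nf
    linarith

lemma le_integral_crossKernel_of_le_half_le (hs : 0 < s) {u v : ℝ} (hu : u ≤ 1 / 2)
    (hv : 1 / 2 ≤ v) :
    2 / s * (exp (-(s * (1 / 2 - u))) + exp (-(s * (v - 1 / 2)))
      - exp (-(s * (1 / 2 - u)) - s * (v - 1 / 2))) ≤ ∫ y, crossKernel s u v y := by
  have hA := integrable_exp_sub_mul_abs hs (-(s * (1 / 2 - u))) v
  have hB := integrable_exp_sub_mul_abs hs (-(s * (v - 1 / 2))) u
  have hC := integrable_exp_sub_mul_abs hs (-(s * (1 / 2 - u)) - s * (v - 1 / 2)) (1 / 2)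
  have hmono := integral_mono ((hA.add hB).sub hC) (integrable_crossKernel hs u v)
    (laplace_combination_le_crossKernel hs.le hu hv)
  rw [integral_sub' (hA.add hB) hC, integral_add' hA hB, integral_exp_sub_mul_abs hs,
    integral_exp_sub_mul_abs hs, integral_exp_sub_mul_abs hs] at hmono
  exact le_of_eq_of_le (by ring) hmono

lemma le_integral_crossKernel (hs : 0 < s) {u v : ℝ} (hu : u ∈ Icc (0 : ℝ) 1)
    (hv : v ∈ Icc (0 : ℝ) 1) :
    2 / s * (2 * exp (-(s / 2)) - exp (-s)) ≤ ∫ y, crossKernel s u v y := by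
  wlog huv : u ≤ v generalizing u v
  · rw [crossKernel_comm]
    exact this hv hu (le_of_not_ge huv)
  set q := exp (-(s / 2))
  have hq_sq : exp (-s) = q ^ 2 := by rw [← exp_nat_mul]; ring_nf
  have hq_le : 2 * q - q ^ 2 ≤ 1 := by nlinarith [sq_nonneg (1 - q)]
  rw [hq_sq]
  rcases le_total (1 / 2) u with hu2 | hu2
  · calc 2 / s * (2 * q - q ^ 2) ≤ 2 / s * 1 := by gcongr
      _ ≤ _ := by simpa using two_div_le_integral_crossKernel hs hu2 huv
  rcases le_total v (1 / 2) with hv2 | hv2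
  · rw [← integral_crossKernel_one_sub, crossKernel_comm]
    calc 2 / s * (2 * q - q ^ 2) ≤ 2 / s * 1 := by gcongr
      _ ≤ _ := by
        simpa using two_div_le_integral_crossKernel hs (u := 1 - v) (v := 1 - u)
          (by linarith) (by linarith)
  refine le_trans ?_ (le_integral_crossKernel_of_le_half_le hs hu2 hv2)
  rw [show -(s * (1 / 2 - u)) - s * (v - 1 / 2) = -(s * (1 / 2 - u)) + -(s * (v - 1 / 2)) by ring,
    exp_add]
  have h₁ : q ≤ exp (-(s * (1 / 2 - u))) := exp_le_exp.2 (by nlinarith [hu.1])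
  have h₁' : exp (-(s * (1 / 2 - u))) ≤ 1 := exp_le_one_iff.2 (by nlinarith)
  have h₂ : q ≤ exp (-(s * (v - 1 / 2))) := exp_le_exp.2 (by nlinarith [hv.2])
  have h₂' : exp (-(s * (v - 1 / 2))) ≤ 1 := exp_le_one_iff.2 (by nlinarith)
  refine mul_le_mul_of_nonneg_left ?_ (by positivity)
  nlinarith [mul_le_mul (sub_le_sub_left h₁ 1) (sub_le_sub_left h₂ 1) (by linarith) (by linarith)]

lemma blanket_mul_sq_ratio_sub_ratio (s c u v y : ℝ) :
    s / 2 * exp (-(s * |y - 1 / 2|)) * (ratio s u y - c * ratio s v y) ^ 2 =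
      s / 2 * (crossKernel s u u y + c ^ 2 * crossKernel s v v y - 2 * c * crossKernel s u v y) := by
  simp only [crossKernel_eq_mul]
  ring

lemma integral_blanket_mul_sq_ratio_sub_ratio (hs : 0 < s) (c u v : ℝ) :
    ∫ y, s / 2 * exp (-(s * |y - 1 / 2|)) * (ratio s u y - c * ratio s v y) ^ 2 =
      s / 2 * ((∫ y, crossKernel s u u y) + c ^ 2 * (∫ y, crossKernel s v v y)
        - 2 * c * ∫ y, crossKernel s u v y) := by
  have huu : Integrable fun y => crossKernel s u u y := integrable_crossKernel hs u u
  have hvv := (integrable_crossKernel hs v v).const_mul (c ^ 2)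
  have huv := (integrable_crossKernel hs u v).const_mul (2 * c)
  have hsum : Integrable fun y => crossKernel s u u y + c ^ 2 * crossKernel s v v y := huu.add hvv
  simp only [blanket_mul_sq_ratio_sub_ratio]
  rw [integral_const_mul, integral_sub hsum huv, integral_add huu hvv,
    integral_const_mul, integral_const_mul]

lemma integral_blanket_mul_sq_ratio_sub_le (hs : 0 < s) {u v : ℝ} (hu : u ∈ Icc (0 : ℝ) 1)
    (hv : v ∈ Icc (0 : ℝ) 1) (ε : ℝ) :
    ∫ y, s / 2 * exp (-(s * |y - 1 / 2|)) * (ratio s u y - exp ε * ratio s v y) ^ 2 ≤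
      (exp (2 * ε) + 1) / 3 * (2 * exp (s / 2) + exp (-s))
        - 2 * exp ε * (2 * exp (-(s / 2)) - exp (-s)) := by
  rw [integral_blanket_mul_sq_ratio_sub_ratio hs, show 2 * ε = ε + ε by ring, exp_add]
  calc _ ≤ s / 2 * ((4 * exp (s / 2) + 2 * exp (-s)) / (3 * s)
        + exp ε ^ 2 * ((4 * exp (s / 2) + 2 * exp (-s)) / (3 * s))
        - 2 * exp ε * (2 / s * (2 * exp (-(s / 2)) - exp (-s)))) := by
        gcongr
        · exact integral_crossKernel_self_le hs hu
        · exact integral_crossKernel_self_le hs hv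
        · exact le_integral_crossKernel hs hu hv
    _ = _ := by
        field_simp
        ring

end LaplaceBlanket

open LaplaceBlanket

theorem stmt18_general (ε₀ ε : ℝ) (hε₀ : 0 < ε₀)
    (x x' : ℝ) (hx : x ∈ Set.Icc (0:ℝ) 1) (hx' : x' ∈ Set.Icc (0:ℝ) 1)
    (μ : ℝ → ℝ → ℝ) (hμ : ∀ t y, μ t y = ε₀ / 2 * Real.exp (-(ε₀ * |y - t|)))
    (ω : ℝ → ℝ) (hω : ∀ y, ω y = ε₀ / 2 * Real.exp (-(ε₀ * |y - 1 / 2|)))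
    (L : ℝ → ℝ) (hL : ∀ y, L y = (μ x y - Real.exp ε * μ x' y) / ω y) :
    (∀ᵐ y ∂((volume : Measure ℝ).withDensity fun y => ENNReal.ofReal (ω y)),
      Real.exp (-(ε₀ / 2)) * (1 - Real.exp (ε + ε₀)) ≤ L y ∧
        L y ≤ Real.exp (ε₀ / 2) * (1 - Real.exp (ε - ε₀))) ∧
    ∫ y, (L y) ^ 2 ∂((volume : Measure ℝ).withDensity fun y => ENNReal.ofReal (ω y))
      ≤ (Real.exp (2 * ε) + 1) / 3 * (2 * Real.exp (ε₀ / 2) + Real.exp (-ε₀))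
        - 2 * Real.exp ε * (2 * Real.exp (-(ε₀ / 2)) - Real.exp (-ε₀)) := by
  have hL_ratio : ∀ y, L y = ratio ε₀ x y - exp ε * ratio ε₀ x' y := fun y => by
    rw [hL, hμ, hμ, hω, laplace_sub_div_blanket hε₀.ne']
  refine ⟨ae_of_all _ fun y => ?_, ?_⟩
  · rw [hL_ratio]
    exact ratio_sub_exp_mul_ratio_mem_Icc hε₀.le hx hx' ε y
  have hω_cont : Continuous ω := by
    rw [show ω = _ from funext hω]
    fun_prop
  rw [integral_withDensity_ofReal_s18 hω_cont.measurable fun y => by rw [hω]; positivity]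
  simp only [smul_eq_mul, hω, hL_ratio]
  exact integral_blanket_mul_sq_ratio_sub_le hε₀ hx hx' ε

/-- privacy amplification random variable of the Laplace mechanism.
For the `ε₀`-LDP Laplace mechanism on `[0,1]` with densities
`μ_x(y) = (ε₀/2)e^{−ε₀|y−x|}`, blanket density `ω(y) = (ε₀/2)e^{−ε₀|y−1/2|}`, inputs
`x, x' ∈ [0,1]`, `W ~ ω` and `L = (μ_x(W) − e^ε·μ_{x'}(W))/ω(W)`:
(1) `e^{−ε₀/2}(1 − e^{ε+ε₀}) ≤ L ≤ e^{ε₀/2}(1 − e^{ε−ε₀})` a.s.;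
(2) `E[L²] ≤ ((e^{2ε}+1)/3)(2e^{ε₀/2} + e^{−ε₀}) − 2e^ε(2e^{−ε₀/2} − e^{−ε₀})`. -/
theorem stmt18 (ε₀ ε : ℝ) (hε₀ : 0 < ε₀) (hε : 0 ≤ ε)
    (x x' : ℝ) (hx : x ∈ Set.Icc (0:ℝ) 1) (hx' : x' ∈ Set.Icc (0:ℝ) 1)
    (μ : ℝ → ℝ → ℝ) (hμ : ∀ t y, μ t y = ε₀ / 2 * Real.exp (-(ε₀ * |y - t|)))
    (ω : ℝ → ℝ) (hω : ∀ y, ω y = ε₀ / 2 * Real.exp (-(ε₀ * |y - 1 / 2|)))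
    (L : ℝ → ℝ) (hL : ∀ y, L y = (μ x y - Real.exp ε * μ x' y) / ω y) :
    (∀ᵐ y ∂((volume : Measure ℝ).withDensity fun y => ENNReal.ofReal (ω y)),
      Real.exp (-(ε₀ / 2)) * (1 - Real.exp (ε + ε₀)) ≤ L y ∧
        L y ≤ Real.exp (ε₀ / 2) * (1 - Real.exp (ε - ε₀))) ∧
    ∫ y, (L y) ^ 2 ∂((volume : Measure ℝ).withDensity fun y => ENNReal.ofReal (ω y))
      ≤ (Real.exp (2 * ε) + 1) / 3 * (2 * Real.exp (ε₀ / 2) + Real.exp (-ε₀))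
        - 2 * Real.exp ε * (2 * Real.exp (-(ε₀ / 2)) - Real.exp (-ε₀)) :=
  stmt18_general ε₀ ε hε₀ x x' hx hx' μ hμ ω hω L hL
end

section
/- Let a ∈ ℝ and let h : [a, ∞) → ℝ be a differentiable function such that h(t) → ∞ as t → ∞, the derivative h' is monotonically increasing on [a, ∞), and h'(a) > 0. Then ∫_a^∞ e^{−h(t)} dt ≤ e^{−h(a)}/h'(a). -/
/-!
Since `h'` is increasing, `h` lies above its tangent line at `a`:
`h t ≥ h a + h' a * (t - a)` for `t ≥ a`. Hence `e^{-h t}` is dominated by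
`e^{-h a - h' a * (t - a)}`, whose integral over `[a, ∞)` is exactly `e^{-h a} / h' a`.
-/

open MeasureTheory Set Real

theorem add_deriv_mul_sub_le_of_monotoneOn {a t : ℝ} {h h' : ℝ → ℝ}
    (hderiv : ∀ x ∈ Ici a, HasDerivAt h (h' x) x) (hmono : MonotoneOn h' (Ici a))
    (ht : a ≤ t) : h a + h' a * (t - a) ≤ h t := by
  have hsub_deriv : ∀ x ∈ Ici a, HasDerivAt (fun x ↦ h x - h' a * x) (h' x - h' a) x :=
    fun x hx ↦ ((hderiv x hx).sub ((hasDerivAt_id x).const_mul (h' a))).congr_deriv (by simp)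
  have hsub_mono : MonotoneOn (fun x ↦ h x - h' a * x) (Ici a) := by
    refine monotoneOn_of_hasDerivWithinAt_nonneg (f' := fun x ↦ h' x - h' a) (convex_Ici a)
      (fun x hx ↦ (hsub_deriv x hx).continuousAt.continuousWithinAt)
      (fun x hx ↦ ?_) (fun x hx ↦ ?_)
    all_goals rw [interior_Ici] at hx
    · exact (hsub_deriv x (mem_Ici_of_Ioi hx)).hasDerivWithinAt
    · exact sub_nonneg.2 (hmono self_mem_Ici (mem_Ici_of_Ioi hx) hx.le)
  have := hsub_mono self_mem_Ici ht ht
  simp only at this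
  linarith

theorem integrableOn_Ici_exp_sub_mul_sub_and_integral_eq {b : ℝ} (hb : 0 < b) (a c : ℝ) :
    IntegrableOn (fun t ↦ exp (c - b * (t - a))) (Ici a) ∧
      ∫ t in Ici a, exp (c - b * (t - a)) = exp c / b := by
  have hsplit : (fun t ↦ exp (c - b * (t - a))) = fun t ↦ exp (c + b * a) * exp (-b * t) := by
    ext t
    rw [← exp_add]
    ring_nf
  rw [hsplit, integrableOn_Ici_iff_integrableOn_Ioi, integral_Ici_eq_integral_Ioi,
    integral_const_mul, integral_exp_mul_Ioi (neg_lt_zero.2 hb)]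
  refine ⟨(integrableOn_exp_mul_Ioi (neg_lt_zero.2 hb) a).const_mul _, ?_⟩
  rw [mul_div_assoc', mul_neg, neg_div_neg_eq, ← exp_add]
  ring_nf

theorem stmt19_general (a : ℝ) (h h' : ℝ → ℝ)
    (hderiv : ∀ t ∈ Set.Ici a, HasDerivAt h (h' t) t)
    (hmono : MonotoneOn h' (Set.Ici a))
    (hpos : 0 < h' a) :
    ∫ t in Set.Ici a, Real.exp (-h t) ≤ Real.exp (-h a) / h' a := by
  obtain ⟨hint, heq⟩ := integrableOn_Ici_exp_sub_mul_sub_and_integral_eq hpos a (-h a)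
  rw [← heq]
  refine setIntegral_mono_of_nonneg (fun t _ ↦ (exp_pos _).le) (fun t ht ↦ ?_) hint
  have := add_deriv_mul_sub_le_of_monotoneOn hderiv hmono ht
  exact exp_le_exp.2 (by linarith)

/-- If `h : [a,∞) → ℝ` is differentiable with `h(t) → ∞` as `t → ∞`,
`h'` monotonically increasing on `[a,∞)`, and `h'(a) > 0`, then
`∫_a^∞ e^{−h(t)} dt ≤ e^{−h(a)}/h'(a)`. -/
theorem stmt19 (a : ℝ) (h h' : ℝ → ℝ)
    (hderiv : ∀ t ∈ Set.Ici a, HasDerivAt h (h' t) t)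
    (htends : Filter.Tendsto h Filter.atTop Filter.atTop)
    (hmono : MonotoneOn h' (Set.Ici a))
    (hpos : 0 < h' a) :
    ∫ t in Set.Ici a, Real.exp (-h t) ≤ Real.exp (-h a) / h' a :=
  stmt19_general a h h' hderiv hmono hpos
end
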